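/- arXiv:2104.06280 — 4 statements merged into one kernel-verified Lean document; each statement's English description precedes it below -/
import Mathlib

section
/- Let I = (N, M, V, G) be a problem instance with |N| > Δ(G), let α > 0, and let N' ⊆ N and M' ⊆ M be such that there is a perfect matching between N' and M' matching each agent i ∈ N' to a distinct item j ∈ M' with v_i(j) ≥ α·μ_i^I. Then for every agent i ∈ N, v_i(M \ M') ≥ |N \ N'|·μ_i^I. -/
open Finset

/-- `A` is a (complete) allocation of all items among `n` agents:
the bundles are pairwise disjoint and together cover all items. -/
def IsAllocation {M : Type*} [Fintype M] [DecidableEq M] {n : ℕ}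
    (A : Fin n → Finset M) : Prop :=
  (∀ i i' : Fin n, i ≠ i' → Disjoint (A i) (A i')) ∧
    Finset.univ.biUnion A = (Finset.univ : Finset M)

/-- An allocation is feasible if every bundle is an independent set of the
conflict graph `G`, i.e., no bundle contains two adjacent items. -/
def FeasibleAlloc {M : Type*} {n : ℕ} (G : SimpleGraph M)
    (A : Fin n → Finset M) : Prop :=
  ∀ i : Fin n, ∀ j ∈ A i, ∀ j' ∈ A i, ¬ G.Adj j j'

/-- Envy-freeness up to one good: every agent `i` values its own bundle at
least as much as any other agent's bundle after removing the item of that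
bundle that `i` values most. -/
def EF1 {M : Type*} {n : ℕ} (v : Fin n → M → ℝ) (A : Fin n → Finset M) : Prop :=
  ∀ i i' : Fin n, ∀ h : (A i').Nonempty,
    ∑ j ∈ A i, v i j ≥ (∑ j ∈ A i', v i j) - (A i').sup' h (v i)

/-- The maximin share of an agent with (additive) valuation `v`, for dividing
the items of `M'` into `n` bundles, each of which must be an independent set of
the conflict graph `G`: the largest value `x` such that some feasible
`n`-partition of `M'` has every bundle worth at least `x` (expressed as the
supremum of the minimum bundle value over all feasible `n`-partitions). -/
noncomputable def mmsOn {M : Type*} [Fintype M] [DecidableEq M] (n : ℕ)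
    (G : SimpleGraph M) (M' : Finset M) (v : M → ℝ) : ℝ :=
  sSup {x : ℝ | ∃ A : Fin n → Finset M,
    (∀ i i' : Fin n, i ≠ i' → Disjoint (A i) (A i')) ∧
    Finset.univ.biUnion A = M' ∧
    (∀ i : Fin n, ∀ j ∈ A i, ∀ j' ∈ A i, ¬ G.Adj j j') ∧
    x = ⨅ i : Fin n, ∑ j ∈ A i, v j}

lemma exists_greedy_alloc {M : Type*} [Fintype M] [DecidableEq M]
    (G : SimpleGraph M) [DecidableRel G.Adj] (n : ℕ) (hΔ : G.maxDegree < n)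
    (s : Finset M) :
    ∃ A : Fin n → Finset M,
      (∀ i i' : Fin n, i ≠ i' → Disjoint (A i) (A i')) ∧
      Finset.univ.biUnion A = s ∧
      (∀ i : Fin n, ∀ j ∈ A i, ∀ j' ∈ A i, ¬ G.Adj j j') := by
  classical
  induction s using Finset.induction_on with
  | empty =>
    exact ⟨fun _ => ∅, fun _ _ _ => disjoint_empty_left _, by ext x; simp,
      fun i j hj => (Finset.notMem_empty j hj).elim⟩
  | @insert a s ha ih =>
    obtain ⟨A, hdisj, hcov, hind⟩ := ih
    -- bundles containing a neighbor of `a`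
    set B : Finset (Fin n) :=
      univ.filter (fun k => ∃ j ∈ A k, G.Adj a j) with hB
    have hBcard : B.card ≤ G.degree a := by
      rw [← SimpleGraph.card_neighborFinset_eq_degree]
      apply Finset.card_le_card_of_injOn
        (fun k => if h : ∃ j ∈ A k, G.Adj a j then h.choose else a)
      · intro k hk
        rw [hB, mem_coe, mem_filter] at hk
        dsimp only
        rw [dif_pos hk.2]
        simpa [SimpleGraph.mem_neighborFinset] using hk.2.choose_spec.2
      · intro k hk k' hk' heq
        simp only [hB, coe_filter, Set.mem_setOf_eq] at hk hk'
        dsimp only at heq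
        rw [dif_pos hk.2, dif_pos hk'.2] at heq
        by_contra hne
        exact Finset.disjoint_left.mp (hdisj k k' hne) hk.2.choose_spec.1
          (heq ▸ hk'.2.choose_spec.1)
    have hBlt : B.card < n := lt_of_le_of_lt
      (hBcard.trans (G.degree_le_maxDegree a)) hΔ
    have : B ≠ univ := fun h => by
      rw [h, Finset.card_univ, Fintype.card_fin] at hBlt; exact lt_irrefl _ hBlt
    have hex : ∃ k, k ∉ B := by
      by_contra h; push_neg at h; exact this (Finset.eq_univ_iff_forall.mpr h)
    obtain ⟨k, hk⟩ := hex
    have hknon : ¬ ∃ j ∈ A k, G.Adj a j := by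
      intro h; exact hk (by simp [hB, h])
    have hAsub : ∀ i, A i ⊆ s := fun i x hx => by
      rw [← hcov]; exact Finset.mem_biUnion.mpr ⟨i, mem_univ i, hx⟩
    have hup : ∀ i : Fin n,
        Function.update A k (insert a (A k)) i = if i = k then insert a (A k) else A i :=
      fun i => Function.update_apply A k _ i
    refine ⟨Function.update A k (insert a (A k)), ?_, ?_, ?_⟩
    · intro i i' hne
      rw [hup i, hup i']
      by_cases h1 : i = k <;> by_cases h2 : i' = k
      · exact absurd (h1.trans h2.symm) hne
      · rw [if_pos h1, if_neg h2, Finset.disjoint_insert_left]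
        exact ⟨fun h => ha (hAsub i' h), hdisj k i' (fun h => h2 h.symm)⟩
      · rw [if_neg h1, if_pos h2, Finset.disjoint_insert_right]
        exact ⟨fun h => ha (hAsub i h), hdisj i k h1⟩
      · rw [if_neg h1, if_neg h2]; exact hdisj i i' hne
    · ext x
      simp only [Finset.mem_biUnion, mem_univ, true_and, Finset.mem_insert]
      constructor
      · rintro ⟨i, hi⟩
        rw [hup i] at hi
        by_cases h1 : i = k
        · rw [if_pos h1, Finset.mem_insert] at hi
          rcases hi with rfl | hi
          · exact Or.inl rfl
          · exact Or.inr (hAsub _ hi)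
        · rw [if_neg h1] at hi
          exact Or.inr (hAsub _ hi)
      · rintro (rfl | hx)
        · exact ⟨k, by rw [hup k, if_pos rfl]; exact Finset.mem_insert_self _ _⟩
        · rw [← hcov] at hx
          obtain ⟨i, _, hi⟩ := Finset.mem_biUnion.mp hx
          by_cases h1 : i = k
          · exact ⟨k, by rw [hup k, if_pos rfl]; exact Finset.mem_insert_of_mem (h1 ▸ hi)⟩
          · exact ⟨i, by rw [hup i, if_neg h1]; exact hi⟩
    · intro i j hj j' hj' hadj
      rw [hup i] at hj hj'
      by_cases h1 : i = k
      · rw [if_pos h1, Finset.mem_insert] at hj hj'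
        rcases hj with rfl | hj <;> rcases hj' with rfl | hj'
        · exact G.irrefl hadj
        · exact hknon ⟨j', hj', hadj⟩
        · exact hknon ⟨j, hj, hadj.symm⟩
        · exact hind k j hj j' hj' hadj
      · rw [if_neg h1] at hj hj'
        exact hind i j hj j' hj' hadj

/-- Matching-based reduction, part (i): if `|N| > Δ(G)` and there is a perfect
matching between a set `N'` of agents and a set `M'` of items assigning to each
`i ∈ N'` a distinct item worth at least `α·μ_i` to `i`, then every agent `i`
values the remaining items `M \ M'` at least `|N \ N'|·μ_i`. -/
theorem matching_reduction_value {M : Type*} [Fintype M] [DecidableEq M]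
    (G : SimpleGraph M) [DecidableRel G.Adj] (n : ℕ) (hΔ : G.maxDegree < n)
    (v : Fin n → M → ℝ) (hv : ∀ i j, 0 ≤ v i j) (α : ℝ) (hα : 0 < α)
    (N' : Finset (Fin n)) (M' : Finset M) (f : Fin n → M)
    (hinj : Set.InjOn f ↑N') (himg : N'.image f = M')
    (hmatch : ∀ i ∈ N', α * mmsOn n G Finset.univ (v i) ≤ v i (f i)) :
    ∀ i : Fin n,
      ((n - N'.card : ℕ) : ℝ) * mmsOn n G Finset.univ (v i) ≤
        ∑ j ∈ Finset.univ \ M', v i j := by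
  classical
  intro i
  have hn : 0 < n := lt_of_le_of_lt (Nat.zero_le _) hΔ
  haveI : Nonempty (Fin n) := ⟨⟨0, hn⟩⟩
  set S : Set ℝ := {x : ℝ | ∃ A : Fin n → Finset M,
    (∀ k k' : Fin n, k ≠ k' → Disjoint (A k) (A k')) ∧
    Finset.univ.biUnion A = (Finset.univ : Finset M) ∧
    (∀ k : Fin n, ∀ j ∈ A k, ∀ j' ∈ A k, ¬ G.Adj j j') ∧
    x = ⨅ k : Fin n, ∑ j ∈ A k, v i j} with hS
  have hSmms : mmsOn n G Finset.univ (v i) = sSup S := rfl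
  have hfin : S.Finite := by
    apply Set.Finite.subset
      (Set.finite_range (fun A : Fin n → Finset M => ⨅ k : Fin n, ∑ j ∈ A k, v i j))
    rintro x ⟨A, _, _, _, hx⟩
    exact ⟨A, hx.symm⟩
  have hne : S.Nonempty := by
    obtain ⟨A, h1, h2, h3⟩ := exists_greedy_alloc G n hΔ Finset.univ
    exact ⟨_, A, h1, h2, h3, rfl⟩
  have hmem : sSup S ∈ S := hne.csSup_mem hfin
  obtain ⟨A, hdisj, hcov, hind, hμ⟩ := hmem
  set μ := mmsOn n G Finset.univ (v i) with hμdef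
  have hμeq : μ = ⨅ k : Fin n, ∑ j ∈ A k, v i j := hSmms.trans hμ
  have hμ_le : ∀ k : Fin n, μ ≤ ∑ j ∈ A k, v i j := by
    intro k
    rw [hμeq]
    exact ciInf_le (Set.Finite.bddBelow (Set.finite_range _)) k
  have hμ0 : 0 ≤ μ := by
    rw [hμeq]
    exact le_ciInf fun k => Finset.sum_nonneg fun j _ => hv i j
  set B : Finset (Fin n) := univ.filter (fun k => ((A k) ∩ M').Nonempty) with hB
  have hBcard : B.card ≤ M'.card := by
    apply Finset.card_le_card_of_injOn
      (fun k => if h : ((A k) ∩ M').Nonempty then h.choose else f i)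
    · intro k hk
      rw [hB, mem_coe, mem_filter] at hk
      dsimp only
      rw [dif_pos hk.2]
      exact (Finset.mem_inter.mp hk.2.choose_spec).2
    · intro k hk k' hk' heq
      simp only [hB, coe_filter, Set.mem_setOf_eq] at hk hk'
      dsimp only at heq
      rw [dif_pos hk.2, dif_pos hk'.2] at heq
      by_contra hne'
      exact Finset.disjoint_left.mp (hdisj k k' hne')
        (Finset.mem_inter.mp hk.2.choose_spec).1
        (heq ▸ (Finset.mem_inter.mp hk'.2.choose_spec).1)
  have hM'N' : M'.card ≤ N'.card := by rw [← himg]; exact Finset.card_image_le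
  set T : Finset (Fin n) := univ.filter (fun k => ¬((A k) ∩ M').Nonempty) with hT
  have hTB : B.card + T.card = n := by
    rw [hB, hT, Finset.card_filter_add_card_filter_not, Finset.card_univ,
      Fintype.card_fin]
  have hcount : (n - N'.card : ℕ) ≤ T.card := by omega
  have hsub : T.biUnion A ⊆ Finset.univ \ M' := by
    intro j hj
    obtain ⟨k, hkT, hjk⟩ := Finset.mem_biUnion.mp hj
    rw [hT, mem_filter] at hkT
    rw [Finset.mem_sdiff]
    exact ⟨mem_univ j, fun hjM => hkT.2 ⟨j, Finset.mem_inter.mpr ⟨hjk, hjM⟩⟩⟩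
  calc ((n - N'.card : ℕ) : ℝ) * μ
      ≤ (T.card : ℝ) * μ := by
        exact mul_le_mul_of_nonneg_right (Nat.cast_le.mpr hcount) hμ0
    _ = ∑ _k ∈ T, μ := by rw [Finset.sum_const, nsmul_eq_mul]
    _ ≤ ∑ k ∈ T, ∑ j ∈ A k, v i j := Finset.sum_le_sum fun k _ => hμ_le k
    _ = ∑ j ∈ T.biUnion A, v i j := by
        refine (Finset.sum_biUnion ?_).symm
        intro k hk k' hk' hne'
        exact hdisj k k' hne'
    _ ≤ ∑ j ∈ Finset.univ \ M', v i j :=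
        Finset.sum_le_sum_of_subset_of_nonneg hsub fun j _ _ => hv i j
end

section
/- Let I = (N, M, V, G) be a problem instance with |N| > Δ(G), let α > 0, and let N' ⊆ N and M' ⊆ M be such that there is a perfect matching between N' and M' matching each agent i ∈ N' to a distinct item j ∈ M' with v_i(j) ≥ α·μ_i^I. Let I' = (N \ N', M \ M', V', G') be the reduced instance with G' = G[M \ M'] the induced subgraph and V' the restricted valuations. If |N \ N'| > Δ(G'), then μ_i^{I'} ≥ μ_i^I for every agent i ∈ N \ N'. -/
open Finset

/-- The maximum degree of the subgraph of `G` induced by the vertex set `S`. -/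
def maxDegOn {M : Type*} [Fintype M] [DecidableEq M] (G : SimpleGraph M)
    [DecidableRel G.Adj] (S : Finset M) : ℕ :=
  S.sup fun j => (S.filter (G.Adj j)).card

lemma extend_alloc {M : Type*} [Fintype M] [DecidableEq M] (G : SimpleGraph M)
    [DecidableRel G.Adj] (T : Finset M) (m : ℕ) (hm : maxDegOn G T < m) :
    ∀ (c : ℕ) (S : Finset M), S.card = c → S ⊆ T → ∀ (B : Fin m → Finset M),
    (∀ i i' : Fin m, i ≠ i' → Disjoint (B i) (B i')) →
    Finset.univ.biUnion B = T \ S →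
    (∀ i : Fin m, ∀ j ∈ B i, ∀ j' ∈ B i, ¬ G.Adj j j') →
    ∃ B' : Fin m → Finset M,
      (∀ i i' : Fin m, i ≠ i' → Disjoint (B' i) (B' i')) ∧
      Finset.univ.biUnion B' = T ∧
      (∀ i : Fin m, ∀ j ∈ B' i, ∀ j' ∈ B' i, ¬ G.Adj j j') ∧
      ∀ i, B i ⊆ B' i := by
  intro c
  induction c with
  | zero =>
    intro S hSc hST B hdisj hcov hind
    have hS : S = ∅ := Finset.card_eq_zero.mp hSc
    subst hS
    exact ⟨B, hdisj, by simpa using hcov, hind, fun i => le_refl _⟩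
  | succ c ih =>
    intro S hSc hST B hdisj hcov hind
    classical
    have hSne : S.Nonempty := Finset.card_pos.mp (by omega)
    obtain ⟨j, hjS⟩ := hSne
    have hjT : j ∈ T := hST hjS
    have hjB : ∀ i, j ∉ B i := by
      intro i hji
      have : j ∈ Finset.univ.biUnion B := Finset.mem_biUnion.mpr ⟨i, mem_univ i, hji⟩
      rw [hcov, Finset.mem_sdiff] at this
      exact this.2 hjS
    -- the set of bundles containing a neighbor of j
    set bad : Finset (Fin m) := Finset.univ.filter (fun i => ∃ j' ∈ B i, G.Adj j j') with hbad
    have hBT : ∀ i, B i ⊆ T := fun i =>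
      (Finset.subset_biUnion_of_mem B (mem_univ i)).trans (hcov ▸ Finset.sdiff_subset)
    have hbadcard : bad.card ≤ (T.filter (G.Adj j)).card := by
      set g : Fin m → M := fun i => if h : ∃ j' ∈ B i, G.Adj j j' then h.choose else j with hg
      apply Finset.card_le_card_of_injOn g
      · intro i hi
        rw [Finset.mem_coe, Finset.mem_filter] at hi
        obtain ⟨-, h⟩ := hi
        have hspec := h.choose_spec
        simp only [hg, dif_pos h]
        exact Finset.mem_filter.mpr ⟨hBT i hspec.1, hspec.2⟩
      · intro i1 h1 i2 h2 heq
        rw [Finset.coe_filter, Set.mem_setOf_eq] at h1 h2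
        by_contra hne
        have hs1 := h1.2.choose_spec
        have hs2 := h2.2.choose_spec
        simp only [hg, dif_pos h1.2, dif_pos h2.2] at heq
        exact Finset.disjoint_left.mp (hdisj i1 i2 hne) hs1.1 (heq ▸ hs2.1)
    have hbadlt : bad.card < m := by
      have h1 : (T.filter (G.Adj j)).card ≤ maxDegOn G T := Finset.le_sup (f := fun j' => (T.filter (G.Adj j')).card) hjT
      omega
    have : (Finset.univ \ bad).Nonempty := by
      rw [← Finset.card_pos, Finset.card_sdiff_of_subset (Finset.subset_univ _), Finset.card_univ,
        Fintype.card_fin]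
      omega
    obtain ⟨i0, hi0⟩ := this
    have hi0bad : ¬ ∃ j' ∈ B i0, G.Adj j j' := by
      rw [Finset.mem_sdiff, hbad, Finset.mem_filter] at hi0
      exact fun h => hi0.2 ⟨mem_univ i0, h⟩
    set B₁ : Fin m → Finset M := Function.update B i0 (insert j (B i0)) with hB₁
    have hB₁sub : ∀ i, B i ⊆ B₁ i := by
      intro i
      by_cases h : i = i0
      · subst h; rw [hB₁, Function.update_self]; exact Finset.subset_insert _ _
      · rw [hB₁, Function.update_of_ne h]
    have hB₁mem : ∀ i x, x ∈ B₁ i ↔ (i = i0 ∧ x = j) ∨ x ∈ B i := by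
      intro i x
      by_cases h : i = i0
      · subst h
        rw [hB₁, Function.update_self, Finset.mem_insert]
        tauto
      · rw [hB₁, Function.update_of_ne h]
        tauto
    obtain ⟨B', h1, h2, h3, h4⟩ := ih (S.erase j) (by rw [Finset.card_erase_of_mem hjS]; omega)
      ((Finset.erase_subset _ _).trans hST) B₁
      (by
        intro i i' hne
        rw [Finset.disjoint_left]
        intro x hx hx'
        rw [hB₁mem] at hx hx'
        rcases hx with ⟨hi, hx⟩ | hx
        · rcases hx' with ⟨hi', _⟩ | hx'
          · exact hne (hi.trans hi'.symm)
          · exact hjB i' (hx ▸ hx')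
        · rcases hx' with ⟨hi', hx'⟩ | hx'
          · exact hjB i (hx' ▸ hx)
          · exact Finset.disjoint_left.mp (hdisj i i' hne) hx hx')
      (by
        ext x
        simp only [Finset.mem_biUnion, mem_univ, true_and, Finset.mem_sdiff,
          Finset.mem_erase]
        constructor
        · rintro ⟨i, hi⟩
          rw [hB₁mem] at hi
          rcases hi with ⟨-, rfl⟩ | hi
          · exact ⟨hjT, fun h => h.1 rfl⟩
          · have : x ∈ T \ S := hcov ▸ Finset.mem_biUnion.mpr ⟨i, mem_univ i, hi⟩
            rw [Finset.mem_sdiff] at this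
            exact ⟨this.1, fun h => this.2 h.2⟩
        · rintro ⟨hxT, hx⟩
          by_cases hxj : x = j
          · exact ⟨i0, (hB₁mem i0 x).mpr (Or.inl ⟨rfl, hxj⟩)⟩
          · have : x ∈ T \ S := Finset.mem_sdiff.mpr ⟨hxT, fun h => hx ⟨hxj, h⟩⟩
            rw [← hcov, Finset.mem_biUnion] at this
            obtain ⟨i, -, hi⟩ := this
            exact ⟨i, (hB₁mem i x).mpr (Or.inr hi)⟩)
      (by
        intro i x hx y hy
        rw [hB₁mem] at hx hy
        rcases hx with ⟨hi, rfl⟩ | hx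
        · subst hi
          rcases hy with ⟨-, rfl⟩ | hy
          · exact G.irrefl
          · exact fun h => hi0bad ⟨y, hy, h⟩
        · rcases hy with ⟨hi, rfl⟩ | hy
          · subst hi
            exact fun h => hi0bad ⟨x, hx, h.symm⟩
          · exact hind i x hx y hy)
    exact ⟨B', h1, h2, h3, fun i => (hB₁sub i).trans (h4 i)⟩

/-- Matching-based reduction, part (ii): with a perfect matching between `N'`
and `M'` as in the reduction, if the number `|N \ N'|` of remaining agents
exceeds the maximum degree of the induced subgraph `G[M \ M']`, then the
maximin share of every remaining agent in the reduced instance is at least its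
maximin share in the original instance. -/
theorem matching_reduction_mms {M : Type*} [Fintype M] [DecidableEq M]
    (G : SimpleGraph M) [DecidableRel G.Adj] (n : ℕ) (hΔ : G.maxDegree < n)
    (v : Fin n → M → ℝ) (hv : ∀ i j, 0 ≤ v i j) (α : ℝ) (hα : 0 < α)
    (N' : Finset (Fin n)) (M' : Finset M) (f : Fin n → M)
    (hinj : Set.InjOn f ↑N') (himg : N'.image f = M')
    (hmatch : ∀ i ∈ N', α * mmsOn n G Finset.univ (v i) ≤ v i (f i))
    (hΔ' : maxDegOn G (Finset.univ \ M') < n - N'.card) :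
    ∀ i ∈ Finset.univ \ N',
      mmsOn n G Finset.univ (v i) ≤
        mmsOn (n - N'.card) G (Finset.univ \ M') (v i) := by
  classical
  intro i _
  set k := N'.card with hk
  set m := n - k with hm
  set T : Finset M := Finset.univ \ M' with hT
  have hm0 : 0 < m := by omega
  haveI : Nonempty (Fin m) := ⟨⟨0, hm0⟩⟩
  have hkM' : M'.card ≤ k := by rw [← himg]; exact Finset.card_image_le
  set R : Set ℝ := {x : ℝ | ∃ A : Fin m → Finset M,
    (∀ i i' : Fin m, i ≠ i' → Disjoint (A i) (A i')) ∧
    Finset.univ.biUnion A = T ∧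
    (∀ i : Fin m, ∀ j ∈ A i, ∀ j' ∈ A i, ¬ G.Adj j j') ∧
    x = ⨅ ii : Fin m, ∑ j ∈ A ii, v i j} with hR
  have hBdd : BddAbove R := by
    refine ⟨∑ j, v i j, ?_⟩
    rintro x ⟨A, -, hcov, -, rfl⟩
    refine le_trans (ciInf_le (Finite.bddBelow_range _) ⟨0, hm0⟩) ?_
    exact Finset.sum_le_sum_of_subset_of_nonneg (Finset.subset_univ _)
      (fun j _ _ => hv i j)
  have key : ∀ (S : Finset M), S ⊆ T → ∀ (B : Fin m → Finset M),
      (∀ i i' : Fin m, i ≠ i' → Disjoint (B i) (B i')) →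
      Finset.univ.biUnion B = T \ S →
      (∀ i : Fin m, ∀ j ∈ B i, ∀ j' ∈ B i, ¬ G.Adj j j') →
      ∃ B' : Fin m → Finset M,
        (∀ i i' : Fin m, i ≠ i' → Disjoint (B' i) (B' i')) ∧
        Finset.univ.biUnion B' = T ∧
        (∀ i : Fin m, ∀ j ∈ B' i, ∀ j' ∈ B' i, ¬ G.Adj j j') ∧
        ∀ i, B i ⊆ B' i :=
    fun S => extend_alloc G T m hΔ' S.card S rfl
  have hR0 : ∃ y ∈ R, 0 ≤ y := by
    obtain ⟨B', h1, h2, h3, -⟩ := key T (le_refl _) (fun _ => ∅)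
      (fun _ _ _ => Finset.disjoint_empty_left _) (by ext x; simp) (by simp)
    refine ⟨_, ⟨B', h1, h2, h3, rfl⟩, ?_⟩
    exact le_ciInf fun i' => Finset.sum_nonneg fun j _ => hv i j
  rw [mmsOn, mmsOn]
  apply Real.sSup_le
  · rintro x ⟨A, hdisj, hcov, hind, rfl⟩
    -- indices of bundles meeting M'
    set bad : Finset (Fin n) := Finset.univ.filter (fun i' => (A i' ∩ M').Nonempty) with hbad
    have hbadcard : bad.card ≤ M'.card := by
      set g : Fin n → M := fun i' => if h : (A i' ∩ M').Nonempty then h.choose else f i with hg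
      apply Finset.card_le_card_of_injOn g
      · intro i' hi'
        rw [Finset.mem_coe, Finset.mem_filter] at hi'
        have hspec := hi'.2.choose_spec
        simp only [hg, dif_pos hi'.2]
        exact (Finset.mem_inter.mp hspec).2
      · intro i1 h1 i2 h2 heq
        rw [Finset.coe_filter, Set.mem_setOf_eq] at h1 h2
        by_contra hne
        have hs1 := Finset.mem_inter.mp h1.2.choose_spec
        have hs2 := Finset.mem_inter.mp h2.2.choose_spec
        simp only [hg, dif_pos h1.2, dif_pos h2.2] at heq
        exact Finset.disjoint_left.mp (hdisj i1 i2 hne) hs1.1 (heq ▸ hs2.1)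
    have hgood : m ≤ (Finset.univ \ bad).card := by
      rw [Finset.card_sdiff_of_subset (Finset.subset_univ _), Finset.card_univ, Fintype.card_fin]
      omega
    obtain ⟨good, hgsub, hgcard⟩ := Finset.exists_subset_card_eq hgood
    set e : Fin m → Fin n := fun i' => good.orderEmbOfFin hgcard i' with he
    have hemem : ∀ i', e i' ∈ Finset.univ \ bad := fun i' =>
      hgsub (Finset.orderEmbOfFin_mem good hgcard i')
    have heinj : Function.Injective e := fun a b hab =>
      (good.orderEmbOfFin hgcard).injective hab
    set B : Fin m → Finset M := fun i' => A (e i') with hB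
    have hBT : ∀ i', B i' ⊆ T := by
      intro i' x hx
      rw [hT, Finset.mem_sdiff]
      refine ⟨mem_univ x, fun hxM' => ?_⟩
      have := hemem i'
      rw [Finset.mem_sdiff, hbad, Finset.mem_filter] at this
      exact this.2 ⟨mem_univ _, ⟨x, Finset.mem_inter.mpr ⟨hx, hxM'⟩⟩⟩
    set S : Finset M := T \ Finset.univ.biUnion B with hS
    have hcovB : Finset.univ.biUnion B = T \ S := by
      rw [hS, Finset.sdiff_sdiff_eq_self]
      intro x hx
      rw [Finset.mem_biUnion] at hx
      obtain ⟨i', -, hx⟩ := hx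
      exact hBT i' hx
    obtain ⟨B', h1, h2, h3, h4⟩ := key S Finset.sdiff_subset B
      (fun a b hab => hdisj (e a) (e b) (fun h => hab (heinj h)))
      hcovB (fun i' => hind (e i'))
    have hy : (⨅ i' : Fin m, ∑ j ∈ B' i', v i j) ∈ R := ⟨B', h1, h2, h3, rfl⟩
    refine le_trans (le_ciInf fun i' => ?_) (le_csSup hBdd hy)
    calc (⨅ i'' : Fin n, ∑ j ∈ A i'', v i j)
        ≤ ∑ j ∈ A (e i'), v i j := ciInf_le (Finite.bddBelow_range _) (e i')
      _ ≤ ∑ j ∈ B' i', v i j :=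
          Finset.sum_le_sum_of_subset_of_nonneg (h4 i') (fun j _ _ => hv i j)
  · obtain ⟨y, hy, hy0⟩ := hR0
    exact le_trans hy0 (le_csSup hBdd hy)
end

section
/- For every problem instance (N, M, V, G) with exactly 3 agents and 3 > Δ(G), there exists a feasible 2/3-approximate MMS allocation. -/
open Finset

section Aux

variable {M : Type*} [Fintype M] [DecidableEq M]

/-- A set of items is independent (conflict-free). -/
def IndepSet (G : SimpleGraph M) (S : Finset M) : Prop :=
  ∀ j ∈ S, ∀ j' ∈ S, ¬ G.Adj j j'

lemma indepSet_subset {G : SimpleGraph M} {S T : Finset M} (h : IndepSet G T)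
    (hs : S ⊆ T) : IndepSet G S := fun j hj j' hj' => h j (hs hj) j' (hs hj')

lemma sum_inter_add_sdiff (w : M → ℝ) (S T : Finset M) :
    ∑ j ∈ S ∩ T, w j + ∑ j ∈ S \ T, w j = ∑ j ∈ S, w j := by
  have hd : Disjoint (S ∩ T) (S \ T) := by
    rw [Finset.disjoint_left]
    intro x hx hx2
    rw [Finset.mem_inter] at hx
    rw [Finset.mem_sdiff] at hx2
    exact hx2.2 hx.2
  have hu : S ∩ T ∪ S \ T = S := by
    ext x
    simp only [Finset.mem_union, Finset.mem_inter, Finset.mem_sdiff]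
    tauto
  rw [← Finset.sum_union hd, hu]

lemma sum_le_of_subset {w : M → ℝ} (hw : ∀ j, 0 ≤ w j) {S T : Finset M}
    (h : S ⊆ T) : ∑ j ∈ S, w j ≤ ∑ j ∈ T, w j :=
  Finset.sum_le_sum_of_subset_of_nonneg h (fun j _ _ => hw j)

/-- Splitting a sum over `S` according to a tri-partition of the ground set. -/
lemma sum_tripart (w : M → ℝ) (B0 B1 B2 : Finset M)
    (hcov : ∀ x : M, x ∈ B0 ∨ x ∈ B1 ∨ x ∈ B2)
    (hd01 : Disjoint B0 B1) (hd02 : Disjoint B0 B2) (hd12 : Disjoint B1 B2)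
    (S : Finset M) :
    ∑ j ∈ S, w j
      = ∑ j ∈ S ∩ B0, w j + ∑ j ∈ S ∩ B1, w j + ∑ j ∈ S ∩ B2, w j := by
  have h1 : (S \ B0) ∩ B1 = S ∩ B1 := by
    ext x
    simp only [Finset.mem_inter, Finset.mem_sdiff]
    constructor
    · rintro ⟨⟨hs, _⟩, hb⟩; exact ⟨hs, hb⟩
    · rintro ⟨hs, hb⟩
      exact ⟨⟨hs, fun h0 => (Finset.disjoint_left.mp hd01) h0 hb⟩, hb⟩
  have h2 : (S \ B0) \ B1 = S ∩ B2 := by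
    ext x
    simp only [Finset.mem_inter, Finset.mem_sdiff]
    constructor
    · rintro ⟨⟨hs, h0⟩, h1'⟩
      rcases hcov x with h | h | h
      · exact absurd h h0
      · exact absurd h h1'
      · exact ⟨hs, h⟩
    · rintro ⟨hs, hb⟩
      exact ⟨⟨hs, fun h0 => (Finset.disjoint_left.mp hd02) h0 hb⟩,
        fun h1' => (Finset.disjoint_left.mp hd12) h1' hb⟩
  have e1 := sum_inter_add_sdiff w S B0
  have e2 := sum_inter_add_sdiff w (S \ B0) B1
  rw [h1, h2] at e2
  linarith

variable (G : SimpleGraph M) [DecidableRel G.Adj]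

/-- With max degree `< 3`, every item has a conflict-free bundle among any
three pairwise disjoint bundles. -/
lemma exists_safe_bundle (hΔ : G.maxDegree < 3) (A : Fin 3 → Finset M)
    (hd : ∀ i i' : Fin 3, i ≠ i' → Disjoint (A i) (A i')) (a : M) :
    ∃ k : Fin 3, ∀ x ∈ A k, ¬ G.Adj a x := by
  by_contra h
  push_neg at h
  obtain ⟨x0, hx0, hadj0⟩ := h 0
  obtain ⟨x1, hx1, hadj1⟩ := h 1
  obtain ⟨x2, hx2, hadj2⟩ := h 2
  have hne01 : x0 ≠ x1 := fun he =>
    (Finset.disjoint_left.mp (hd 0 1 (by decide))) hx0 (he ▸ hx1)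
  have hne02 : x0 ≠ x2 := fun he =>
    (Finset.disjoint_left.mp (hd 0 2 (by decide))) hx0 (he ▸ hx2)
  have hne12 : x1 ≠ x2 := fun he =>
    (Finset.disjoint_left.mp (hd 1 2 (by decide))) hx1 (he ▸ hx2)
  have hsub : ({x0, x1, x2} : Finset M) ⊆ G.neighborFinset a := by
    intro x hx
    rw [SimpleGraph.mem_neighborFinset]
    simp only [Finset.mem_insert, Finset.mem_singleton] at hx
    rcases hx with rfl | rfl | rfl
    · exact hadj0
    · exact hadj1
    · exact hadj2
  have hcard : ({x0, x1, x2} : Finset M).card = 3 := by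
    rw [Finset.card_insert_of_notMem (by simp [hne01, hne02]),
      Finset.card_insert_of_notMem (by simp [hne12]), Finset.card_singleton]
  have h3 : 3 ≤ G.degree a := by
    rw [← SimpleGraph.card_neighborFinset_eq_degree, ← hcard]
    exact Finset.card_le_card hsub
  have := G.degree_le_maxDegree a
  omega

/-- Any partial feasible allocation extends to a complete feasible allocation
when the max degree is less than 3. -/
lemma extend_alloc_s15 (hΔ : G.maxDegree < 3) (s : Finset M) :
    ∀ A : Fin 3 → Finset M,
      (∀ i i' : Fin 3, i ≠ i' → Disjoint (A i) (A i')) →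
      (∀ i, IndepSet G (A i)) →
      Finset.univ.biUnion A = Finset.univ \ s →
      ∃ A' : Fin 3 → Finset M, (∀ i, A i ⊆ A' i) ∧
        (∀ i i' : Fin 3, i ≠ i' → Disjoint (A' i) (A' i')) ∧
        (∀ i, IndepSet G (A' i)) ∧
        Finset.univ.biUnion A' = Finset.univ := by
  classical
  induction s using Finset.induction_on with
  | empty =>
    intro A hd hi hu
    exact ⟨A, fun _ => le_rfl, hd, hi, by simpa using hu⟩
  | @insert a s ha ih =>
    intro A hd hi hu
    have hnotmem : ∀ i, a ∉ A i := by
      intro i hmem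
      have : a ∈ Finset.univ.biUnion A :=
        Finset.mem_biUnion.mpr ⟨i, Finset.mem_univ i, hmem⟩
      rw [hu, Finset.mem_sdiff] at this
      exact this.2 (Finset.mem_insert_self a s)
    obtain ⟨k, hk⟩ := exists_safe_bundle G hΔ A hd a
    set A1 : Fin 3 → Finset M := Function.update A k (insert a (A k)) with hA1
    have hA1k : A1 k = insert a (A k) := by simp [hA1]
    have hA1ne : ∀ i, i ≠ k → A1 i = A i := by
      intro i hik; simp [hA1, Function.update_of_ne hik]
    have hd1 : ∀ i i' : Fin 3, i ≠ i' → Disjoint (A1 i) (A1 i') := by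
      intro i i' hii
      by_cases hik : k = i
      · subst hik
        rw [hA1k, hA1ne i' (Ne.symm hii)]
        rw [Finset.disjoint_left]
        intro x hx hx'
        rw [Finset.mem_insert] at hx
        rcases hx with rfl | hx
        · exact hnotmem i' hx'
        · exact (Finset.disjoint_left.mp (hd k i' hii)) hx hx'
      · by_cases hik' : k = i'
        · subst hik'
          rw [hA1k, hA1ne i (Ne.symm hik)]
          rw [Finset.disjoint_left]
          intro x hx hx'
          rw [Finset.mem_insert] at hx'
          rcases hx' with rfl | hx'
          · exact hnotmem i hx
          · exact (Finset.disjoint_left.mp (hd i k hii)) hx hx'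
        · rw [hA1ne i (Ne.symm hik), hA1ne i' (Ne.symm hik')]
          exact hd i i' hii
    have hi1 : ∀ i, IndepSet G (A1 i) := by
      intro i
      by_cases hik : k = i
      · subst hik
        rw [hA1k]
        intro j hj j' hj'
        rw [Finset.mem_insert] at hj hj'
        rcases hj with rfl | hj <;> rcases hj' with rfl | hj'
        · exact G.irrefl
        · exact hk j' hj'
        · intro hadj; exact hk j hj (G.adj_symm hadj)
        · exact hi k j hj j' hj'
      · rw [hA1ne i (Ne.symm hik)]; exact hi i
    have hu1 : Finset.univ.biUnion A1 = Finset.univ \ s := by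
      have h1 : Finset.univ.biUnion A1 = insert a (Finset.univ.biUnion A) := by
        ext x
        simp only [Finset.mem_biUnion, Finset.mem_univ, true_and, Finset.mem_insert]
        constructor
        · rintro ⟨i, hx⟩
          by_cases hik : k = i
          · subst hik
            rw [hA1k, Finset.mem_insert] at hx
            rcases hx with rfl | hx
            · exact Or.inl rfl
            · exact Or.inr ⟨k, hx⟩
          · rw [hA1ne i (Ne.symm hik)] at hx
            exact Or.inr ⟨i, hx⟩
        · rintro (rfl | ⟨i, hx⟩)
          · exact ⟨k, by rw [hA1k]; exact Finset.mem_insert_self x (A k)⟩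
          · by_cases hik : k = i
            · subst hik
              exact ⟨k, by rw [hA1k]; exact Finset.mem_insert_of_mem hx⟩
            · exact ⟨i, by rw [hA1ne i (Ne.symm hik)]; exact hx⟩
      rw [h1, hu]
      ext x
      simp only [Finset.mem_insert, Finset.mem_sdiff, Finset.mem_univ, true_and,
        Finset.mem_insert]
      constructor
      · rintro (rfl | h)
        · exact ha
        · exact fun hs => h (Or.inr hs)
      · intro h
        by_cases hxa : x = a
        · exact Or.inl hxa
        · exact Or.inr (fun hh => by
            rcases hh with rfl | hh
            · exact hxa rfl
            · exact h hh)
    obtain ⟨A', hsub, hd', hi', hu'⟩ := ih A1 hd1 hi1 hu1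
    refine ⟨A', ?_, hd', hi', hu'⟩
    intro i
    by_cases hik : k = i
    · subst hik
      exact le_trans (by rw [hA1k]; exact Finset.subset_insert a (A k)) (hsub k)
    · exact le_trans (le_of_eq (hA1ne i (Ne.symm hik)).symm) (hsub i)

/-- The maximin share is attained by some feasible partition, and is
nonnegative for nonnegative valuations. -/
lemma exists_opt_partition (hΔ : G.maxDegree < 3) (w : M → ℝ)
    (hw : ∀ j, 0 ≤ w j) :
    ∃ A : Fin 3 → Finset M,
      (∀ i i' : Fin 3, i ≠ i' → Disjoint (A i) (A i')) ∧
      (∀ i, IndepSet G (A i)) ∧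
      Finset.univ.biUnion A = Finset.univ ∧
      0 ≤ mmsOn 3 G Finset.univ w ∧
      (∀ k : Fin 3, mmsOn 3 G Finset.univ w ≤ ∑ j ∈ A k, w j) := by
  classical
  obtain ⟨A₀, _, hd₀, hi₀, hu₀⟩ := extend_alloc_s15 G hΔ Finset.univ (fun _ => ∅)
    (fun _ _ _ => Finset.disjoint_empty_left _)
    (fun _ => by intro j hj; simp at hj)
    (by ext x; simp)
  set S : Set ℝ := {x : ℝ | ∃ A : Fin 3 → Finset M,
    (∀ i i' : Fin 3, i ≠ i' → Disjoint (A i) (A i')) ∧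
    Finset.univ.biUnion A = Finset.univ ∧
    (∀ i : Fin 3, ∀ j ∈ A i, ∀ j' ∈ A i, ¬ G.Adj j j') ∧
    x = ⨅ i : Fin 3, ∑ j ∈ A i, w j} with hS
  have hmms : mmsOn 3 G Finset.univ w = sSup S := rfl
  have hne : S.Nonempty := ⟨_, ⟨A₀, hd₀, hu₀, hi₀, rfl⟩⟩
  have hfin : S.Finite := by
    apply Set.Finite.subset
      (Set.finite_range (fun A : Fin 3 → Finset M => ⨅ i : Fin 3, ∑ j ∈ A i, w j))
    rintro x ⟨A, _, _, _, rfl⟩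
    exact ⟨A, rfl⟩
  have hmem := hne.csSup_mem hfin
  rw [← hmms] at hmem
  obtain ⟨A, hd, hu, hi, hx⟩ := hmem
  refine ⟨A, hd, hi, hu, ?_, ?_⟩
  · rw [hx]
    exact le_ciInf fun k => Finset.sum_nonneg fun j _ => hw j
  · intro k
    rw [hx]
    exact ciInf_le (Set.Finite.bddBelow (Set.finite_range _)) k

end Aux

set_option maxHeartbeats 1000000

section Core

variable {M : Type*} [Fintype M] [DecidableEq M] (G : SimpleGraph M)

/-- Case 2 with the maximizing bundle of agent 2's partition singled out. -/
lemma case2' (u0 u1 u2 : M → ℝ) (hu2 : ∀ j, 0 ≤ u2 j)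
    (m0 m1 m2 : ℝ) (hm0 : 0 ≤ m0) (hm1 : 0 ≤ m1) (hm2 : 0 ≤ m2)
    (Bσ Bs1 Bs2 : Finset M)
    (hBcov : ∀ x : M, x ∈ Bσ ∨ x ∈ Bs1 ∨ x ∈ Bs2)
    (hdσ1 : Disjoint Bσ Bs1) (hdσ2 : Disjoint Bσ Bs2) (hdB12 : Disjoint Bs1 Bs2)
    (hiσ : IndepSet G Bσ) (hiB1 : IndepSet G Bs1) (hiB2 : IndepSet G Bs2)
    (hvB1 : m0 ≤ ∑ j ∈ Bs1, u0 j) (hvB2 : m0 ≤ ∑ j ∈ Bs2, u0 j)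
    (hs11 : ∑ j ∈ Bs1, u1 j < 2/3 * m1) (hs21 : ∑ j ∈ Bs2, u1 j < 2/3 * m1)
    (hs12 : ∑ j ∈ Bs1, u2 j < 2/3 * m2) (hs22 : ∑ j ∈ Bs2, u2 j < 2/3 * m2)
    (htot1 : 3 * m1 ≤ ∑ j ∈ (Finset.univ : Finset M), u1 j)
    (C0 Ca Cb : Finset M)
    (hCcov : ∀ x : M, x ∈ C0 ∨ x ∈ Ca ∨ x ∈ Cb)
    (hdC0a : Disjoint C0 Ca) (hdC0b : Disjoint C0 Cb) (hdCab : Disjoint Ca Cb)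
    (hiC0 : IndepSet G C0) (hiCa : IndepSet G Ca) (hiCb : IndepSet G Cb)
    (hvC0 : m2 ≤ ∑ j ∈ C0, u2 j) (hvCa : m2 ≤ ∑ j ∈ Ca, u2 j)
    (hvCb : m2 ≤ ∑ j ∈ Cb, u2 j)
    (hz3 : ∑ j ∈ Bσ, u2 j ≤ 3 * ∑ j ∈ C0 ∩ Bσ, u2 j) :
    ∃ D0 D1 D2 : Finset M,
      Disjoint D0 D1 ∧ Disjoint D0 D2 ∧ Disjoint D1 D2 ∧
      IndepSet G D0 ∧ IndepSet G D1 ∧ IndepSet G D2 ∧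
      2/3 * m0 ≤ ∑ j ∈ D0, u0 j ∧ 2/3 * m1 ≤ ∑ j ∈ D1, u1 j ∧
      2/3 * m2 ≤ ∑ j ∈ D2, u2 j := by
  classical
  -- totals
  have htotB1 := sum_tripart u1 Bσ Bs1 Bs2 hBcov hdσ1 hdσ2 hdB12 Finset.univ
  have htotB2 := sum_tripart u2 Bσ Bs1 Bs2 hBcov hdσ1 hdσ2 hdB12 Finset.univ
  have htotC2 := sum_tripart u2 C0 Ca Cb hCcov hdC0a hdC0b hdCab Finset.univ
  simp only [Finset.univ_inter] at htotB1 htotB2 htotC2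
  have htot2 : 3 * m2 ≤ ∑ j ∈ (Finset.univ : Finset M), u2 j := by
    rw [htotC2]; linarith
  have hBσ1 : 5/3 * m1 < ∑ j ∈ Bσ, u1 j := by
    rw [htotB1] at htot1; linarith
  have hBσ2 : 5/3 * m2 < ∑ j ∈ Bσ, u2 j := by
    rw [htotB2] at htot2; linarith
  by_cases hA : 2/3 * m1 ≤ ∑ j ∈ Bσ \ C0, u1 j
  · -- Case A : agent 1 takes Bσ \ C0
    have hC0split := sum_tripart u2 Bσ Bs1 Bs2 hBcov hdσ1 hdσ2 hdB12 C0
    by_cases hss : ∑ j ∈ C0 ∩ Bs2, u2 j ≤ ∑ j ∈ C0 ∩ Bs1, u2 j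
    · -- D2 = C0 ∩ (Bσ ∪ Bs1), D0 = Bs2
      refine ⟨Bs2, Bσ \ C0, C0 ∩ (Bσ ∪ Bs1), ?_, ?_, ?_, hiB2,
        indepSet_subset hiσ (Finset.sdiff_subset), 
        indepSet_subset hiC0 (Finset.inter_subset_left), ?_, hA, ?_⟩
      · exact (hdσ2.symm).mono_right (Finset.sdiff_subset)
      · refine Finset.disjoint_left.mpr ?_
        intro x hx hx2
        rw [Finset.mem_inter, Finset.mem_union] at hx2
        rcases hx2.2 with h | h
        · exact (Finset.disjoint_left.mp hdσ2) h hx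
        · exact (Finset.disjoint_left.mp hdB12) h hx
      · exact (Finset.sdiff_disjoint).mono_right (Finset.inter_subset_left)
      · linarith
      · have hsplit : C0 ∩ (Bσ ∪ Bs1) = (C0 ∩ Bσ) ∪ (C0 ∩ Bs1) :=
          Finset.inter_union_distrib_left C0 Bσ Bs1
        have hdisj : Disjoint (C0 ∩ Bσ) (C0 ∩ Bs1) :=
          hdσ1.mono (Finset.inter_subset_right) (Finset.inter_subset_right)
        rw [hsplit, Finset.sum_union hdisj]
        linarith
    · -- D2 = C0 ∩ (Bσ ∪ Bs2), D0 = Bs1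
      push_neg at hss
      refine ⟨Bs1, Bσ \ C0, C0 ∩ (Bσ ∪ Bs2), ?_, ?_, ?_, hiB1,
        indepSet_subset hiσ (Finset.sdiff_subset),
        indepSet_subset hiC0 (Finset.inter_subset_left), ?_, hA, ?_⟩
      · exact (hdσ1.symm).mono_right (Finset.sdiff_subset)
      · refine Finset.disjoint_left.mpr ?_
        intro x hx hx2
        rw [Finset.mem_inter, Finset.mem_union] at hx2
        rcases hx2.2 with h | h
        · exact (Finset.disjoint_left.mp hdσ1) h hx
        · exact (Finset.disjoint_left.mp hdB12.symm) h hx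
      · exact (Finset.sdiff_disjoint).mono_right (Finset.inter_subset_left)
      · linarith
      · have hsplit : C0 ∩ (Bσ ∪ Bs2) = (C0 ∩ Bσ) ∪ (C0 ∩ Bs2) :=
          Finset.inter_union_distrib_left C0 Bσ Bs2
        have hdisj : Disjoint (C0 ∩ Bσ) (C0 ∩ Bs2) :=
          hdσ2.mono (Finset.inter_subset_right) (Finset.inter_subset_right)
        rw [hsplit, Finset.sum_union hdisj]
        linarith
  · -- Case B : agent 1 takes Bσ ∩ C0
    push_neg at hA
    have hD1 : 2/3 * m1 ≤ ∑ j ∈ Bσ ∩ C0, u1 j := by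
      have := sum_inter_add_sdiff u1 Bσ C0
      linarith
    -- find a good option among the four C \ B combinations
    have h4 : 2/3 * m2 ≤ ∑ j ∈ Ca \ Bs1, u2 j ∨ 2/3 * m2 ≤ ∑ j ∈ Ca \ Bs2, u2 j ∨
        2/3 * m2 ≤ ∑ j ∈ Cb \ Bs1, u2 j ∨ 2/3 * m2 ≤ ∑ j ∈ Cb \ Bs2, u2 j := by
      by_contra hno
      push_neg at hno
      obtain ⟨hn1, hn2, hn3, hn4⟩ := hno
      have ea1 := sum_inter_add_sdiff u2 Ca Bs1
      have ea2 := sum_inter_add_sdiff u2 Ca Bs2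
      have eb1 := sum_inter_add_sdiff u2 Cb Bs1
      have eb2 := sum_inter_add_sdiff u2 Cb Bs2
      have hb1 : ∑ j ∈ Ca ∩ Bs1, u2 j + ∑ j ∈ Cb ∩ Bs1, u2 j
          ≤ ∑ j ∈ Bs1, u2 j := by
        have hdisj : Disjoint (Ca ∩ Bs1) (Cb ∩ Bs1) :=
          hdCab.mono (Finset.inter_subset_left) (Finset.inter_subset_left)
        rw [← Finset.sum_union hdisj]
        exact sum_le_of_subset hu2
          (Finset.union_subset (Finset.inter_subset_right) (Finset.inter_subset_right))
      have hb2 : ∑ j ∈ Ca ∩ Bs2, u2 j + ∑ j ∈ Cb ∩ Bs2, u2 j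
          ≤ ∑ j ∈ Bs2, u2 j := by
        have hdisj : Disjoint (Ca ∩ Bs2) (Cb ∩ Bs2) :=
          hdCab.mono (Finset.inter_subset_left) (Finset.inter_subset_left)
        rw [← Finset.sum_union hdisj]
        exact sum_le_of_subset hu2
          (Finset.union_subset (Finset.inter_subset_right) (Finset.inter_subset_right))
      linarith
    have hbuild : ∀ Ct Bs : Finset M, Disjoint C0 Ct → Disjoint Bσ Bs →
        IndepSet G Ct → IndepSet G Bs → m0 ≤ ∑ j ∈ Bs, u0 j →
        2/3 * m2 ≤ ∑ j ∈ Ct \ Bs, u2 j →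
        ∃ D0 D1 D2 : Finset M,
          Disjoint D0 D1 ∧ Disjoint D0 D2 ∧ Disjoint D1 D2 ∧
          IndepSet G D0 ∧ IndepSet G D1 ∧ IndepSet G D2 ∧
          2/3 * m0 ≤ ∑ j ∈ D0, u0 j ∧ 2/3 * m1 ≤ ∑ j ∈ D1, u1 j ∧
          2/3 * m2 ≤ ∑ j ∈ D2, u2 j := by
      intro Ct Bs hdC hdB hiCt hiBs hv0 hv2
      refine ⟨Bs, Bσ ∩ C0, Ct \ Bs, ?_, ?_, ?_, hiBs,
        indepSet_subset hiσ (Finset.inter_subset_left),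
        indepSet_subset hiCt (Finset.sdiff_subset), ?_, hD1, hv2⟩
      · exact (hdB.symm).mono_right (Finset.inter_subset_left)
      · exact (Finset.sdiff_disjoint).symm
      · exact (hdC.mono_left (Finset.inter_subset_right)).mono_right
          (Finset.sdiff_subset)
      · linarith
    rcases h4 with h | h | h | h
    · exact hbuild Ca Bs1 hdC0a hdσ1 hiCa hiB1 hvB1 h
    · exact hbuild Ca Bs2 hdC0a hdσ2 hiCa hiB2 hvB2 h
    · exact hbuild Cb Bs1 hdC0b hdσ1 hiCb hiB1 hvB1 h
    · exact hbuild Cb Bs2 hdC0b hdσ2 hiCb hiB2 hvB2 h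

/-- Case 2: both agents 1 and 2 like only the common bundle `Bσ`. -/
lemma case2 (u0 u1 u2 : M → ℝ) (hu2 : ∀ j, 0 ≤ u2 j)
    (m0 m1 m2 : ℝ) (hm0 : 0 ≤ m0) (hm1 : 0 ≤ m1) (hm2 : 0 ≤ m2)
    (Bσ Bs1 Bs2 : Finset M)
    (hBcov : ∀ x : M, x ∈ Bσ ∨ x ∈ Bs1 ∨ x ∈ Bs2)
    (hdσ1 : Disjoint Bσ Bs1) (hdσ2 : Disjoint Bσ Bs2) (hdB12 : Disjoint Bs1 Bs2)
    (hiσ : IndepSet G Bσ) (hiB1 : IndepSet G Bs1) (hiB2 : IndepSet G Bs2)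
    (hvB1 : m0 ≤ ∑ j ∈ Bs1, u0 j) (hvB2 : m0 ≤ ∑ j ∈ Bs2, u0 j)
    (hs11 : ∑ j ∈ Bs1, u1 j < 2/3 * m1) (hs21 : ∑ j ∈ Bs2, u1 j < 2/3 * m1)
    (hs12 : ∑ j ∈ Bs1, u2 j < 2/3 * m2) (hs22 : ∑ j ∈ Bs2, u2 j < 2/3 * m2)
    (htot1 : 3 * m1 ≤ ∑ j ∈ (Finset.univ : Finset M), u1 j)
    (C0 C1 C2 : Finset M)
    (hCcov : ∀ x : M, x ∈ C0 ∨ x ∈ C1 ∨ x ∈ C2)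
    (hdC01 : Disjoint C0 C1) (hdC02 : Disjoint C0 C2) (hdC12 : Disjoint C1 C2)
    (hiC0 : IndepSet G C0) (hiC1 : IndepSet G C1) (hiC2 : IndepSet G C2)
    (hvC0 : m2 ≤ ∑ j ∈ C0, u2 j) (hvC1 : m2 ≤ ∑ j ∈ C1, u2 j)
    (hvC2 : m2 ≤ ∑ j ∈ C2, u2 j) :
    ∃ D0 D1 D2 : Finset M,
      Disjoint D0 D1 ∧ Disjoint D0 D2 ∧ Disjoint D1 D2 ∧
      IndepSet G D0 ∧ IndepSet G D1 ∧ IndepSet G D2 ∧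
      2/3 * m0 ≤ ∑ j ∈ D0, u0 j ∧ 2/3 * m1 ≤ ∑ j ∈ D1, u1 j ∧
      2/3 * m2 ≤ ∑ j ∈ D2, u2 j := by
  classical
  have hsplit := sum_tripart u2 C0 C1 C2 hCcov hdC01 hdC02 hdC12 Bσ
  rw [Finset.inter_comm Bσ C0, Finset.inter_comm Bσ C1, Finset.inter_comm Bσ C2]
    at hsplit
  rcases le_total (∑ j ∈ C0 ∩ Bσ, u2 j) (∑ j ∈ C1 ∩ Bσ, u2 j) with h01 | h01
  · rcases le_total (∑ j ∈ C1 ∩ Bσ, u2 j) (∑ j ∈ C2 ∩ Bσ, u2 j) with h12 | h12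
    · -- C2 is max
      exact case2' G u0 u1 u2 hu2 m0 m1 m2 hm0 hm1 hm2 Bσ Bs1 Bs2 hBcov hdσ1 hdσ2
        hdB12 hiσ hiB1 hiB2 hvB1 hvB2 hs11 hs21 hs12 hs22 htot1 C2 C0 C1
        (fun x => by rcases hCcov x with h | h | h
                     exacts [Or.inr (Or.inl h), Or.inr (Or.inr h), Or.inl h])
        hdC02.symm hdC12.symm hdC01 hiC2 hiC0 hiC1 hvC2 hvC0 hvC1
        (by linarith)
    · -- C1 is max
      exact case2' G u0 u1 u2 hu2 m0 m1 m2 hm0 hm1 hm2 Bσ Bs1 Bs2 hBcov hdσ1 hdσ2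
        hdB12 hiσ hiB1 hiB2 hvB1 hvB2 hs11 hs21 hs12 hs22 htot1 C1 C0 C2
        (fun x => by rcases hCcov x with h | h | h
                     exacts [Or.inr (Or.inl h), Or.inl h, Or.inr (Or.inr h)])
        hdC01.symm hdC12 hdC02 hiC1 hiC0 hiC2 hvC1 hvC0 hvC2
        (by linarith)
  · rcases le_total (∑ j ∈ C0 ∩ Bσ, u2 j) (∑ j ∈ C2 ∩ Bσ, u2 j) with h02 | h02
    · -- C2 is max
      exact case2' G u0 u1 u2 hu2 m0 m1 m2 hm0 hm1 hm2 Bσ Bs1 Bs2 hBcov hdσ1 hdσ2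
        hdB12 hiσ hiB1 hiB2 hvB1 hvB2 hs11 hs21 hs12 hs22 htot1 C2 C0 C1
        (fun x => by rcases hCcov x with h | h | h
                     exacts [Or.inr (Or.inl h), Or.inr (Or.inr h), Or.inl h])
        hdC02.symm hdC12.symm hdC01 hiC2 hiC0 hiC1 hvC2 hvC0 hvC1
        (by linarith)
    · -- C0 is max
      exact case2' G u0 u1 u2 hu2 m0 m1 m2 hm0 hm1 hm2 Bσ Bs1 Bs2 hBcov hdσ1 hdσ2
        hdB12 hiσ hiB1 hiB2 hvB1 hvB2 hs11 hs21 hs12 hs22 htot1 C0 C1 C2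
        hCcov hdC01 hdC02 hdC12 hiC0 hiC1 hiC2 hvC0 hvC1 hvC2
        (by linarith)

/-- Core construction: there is a partial feasible allocation giving each agent
at least `2/3` of its maximin share. -/
lemma core (u0 u1 u2 : M → ℝ) (hu1 : ∀ j, 0 ≤ u1 j) (hu2 : ∀ j, 0 ≤ u2 j)
    (m0 m1 m2 : ℝ) (hm0 : 0 ≤ m0) (hm1 : 0 ≤ m1) (hm2 : 0 ≤ m2)
    (B0 B1 B2 : Finset M)
    (hBcov : ∀ x : M, x ∈ B0 ∨ x ∈ B1 ∨ x ∈ B2)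
    (hdB01 : Disjoint B0 B1) (hdB02 : Disjoint B0 B2) (hdB12 : Disjoint B1 B2)
    (hiB0 : IndepSet G B0) (hiB1 : IndepSet G B1) (hiB2 : IndepSet G B2)
    (hvB0 : m0 ≤ ∑ j ∈ B0, u0 j) (hvB1 : m0 ≤ ∑ j ∈ B1, u0 j)
    (hvB2 : m0 ≤ ∑ j ∈ B2, u0 j)
    (C0 C1 C2 : Finset M)
    (hCcov : ∀ x : M, x ∈ C0 ∨ x ∈ C1 ∨ x ∈ C2)
    (hdC01 : Disjoint C0 C1) (hdC02 : Disjoint C0 C2) (hdC12 : Disjoint C1 C2)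
    (hiC0 : IndepSet G C0) (hiC1 : IndepSet G C1) (hiC2 : IndepSet G C2)
    (hvC0 : m2 ≤ ∑ j ∈ C0, u2 j) (hvC1 : m2 ≤ ∑ j ∈ C1, u2 j)
    (hvC2 : m2 ≤ ∑ j ∈ C2, u2 j)
    (htot1 : 3 * m1 ≤ ∑ j ∈ (Finset.univ : Finset M), u1 j) :
    ∃ D0 D1 D2 : Finset M,
      Disjoint D0 D1 ∧ Disjoint D0 D2 ∧ Disjoint D1 D2 ∧
      IndepSet G D0 ∧ IndepSet G D1 ∧ IndepSet G D2 ∧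
      2/3 * m0 ≤ ∑ j ∈ D0, u0 j ∧ 2/3 * m1 ≤ ∑ j ∈ D1, u1 j ∧
      2/3 * m2 ≤ ∑ j ∈ D2, u2 j := by
  classical
  have htotB1 := sum_tripart u1 B0 B1 B2 hBcov hdB01 hdB02 hdB12 Finset.univ
  have htotC2 := sum_tripart u2 C0 C1 C2 hCcov hdC01 hdC02 hdC12 Finset.univ
  have htotB2 := sum_tripart u2 B0 B1 B2 hBcov hdB01 hdB02 hdB12 Finset.univ
  simp only [Finset.univ_inter] at htotB1 htotC2 htotB2
  have htot2 : 3 * m2 ≤ ∑ j ∈ (Finset.univ : Finset M), u2 j := by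
    rw [htotC2]; linarith
  -- matching case analysis
  by_cases hM : (2/3 * m1 ≤ ∑ j ∈ B0, u1 j ∧ 2/3 * m2 ≤ ∑ j ∈ B1, u2 j) ∨
      (2/3 * m1 ≤ ∑ j ∈ B0, u1 j ∧ 2/3 * m2 ≤ ∑ j ∈ B2, u2 j) ∨
      (2/3 * m1 ≤ ∑ j ∈ B1, u1 j ∧ 2/3 * m2 ≤ ∑ j ∈ B0, u2 j) ∨
      (2/3 * m1 ≤ ∑ j ∈ B1, u1 j ∧ 2/3 * m2 ≤ ∑ j ∈ B2, u2 j) ∨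
      (2/3 * m1 ≤ ∑ j ∈ B2, u1 j ∧ 2/3 * m2 ≤ ∑ j ∈ B0, u2 j) ∨
      (2/3 * m1 ≤ ∑ j ∈ B2, u1 j ∧ 2/3 * m2 ≤ ∑ j ∈ B1, u2 j)
  · rcases hM with ⟨h1, h2⟩ | ⟨h1, h2⟩ | ⟨h1, h2⟩ | ⟨h1, h2⟩ | ⟨h1, h2⟩ | ⟨h1, h2⟩
    · exact ⟨B2, B0, B1, hdB02.symm, hdB12.symm, hdB01, hiB2, hiB0, hiB1,
        by linarith, h1, h2⟩
    · exact ⟨B1, B0, B2, hdB01.symm, hdB12, hdB02, hiB1, hiB0, hiB2,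
        by linarith, h1, h2⟩
    · exact ⟨B2, B1, B0, hdB12.symm, hdB02.symm, hdB01.symm, hiB2, hiB1, hiB0,
        by linarith, h1, h2⟩
    · exact ⟨B0, B1, B2, hdB01, hdB02, hdB12, hiB0, hiB1, hiB2,
        by linarith, h1, h2⟩
    · exact ⟨B1, B2, B0, hdB12, hdB01.symm, hdB02.symm, hiB1, hiB2, hiB0,
        by linarith, h1, h2⟩
    · exact ⟨B0, B2, B1, hdB02, hdB01, hdB12.symm, hiB0, hiB2, hiB1,
        by linarith, h1, h2⟩
  · push_neg at hM
    obtain ⟨hM1, hM2, hM3, hM4, hM5, hM6⟩ := hM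
    -- each agent likes some bundle
    have hex1 : 2/3 * m1 ≤ ∑ j ∈ B0, u1 j ∨ 2/3 * m1 ≤ ∑ j ∈ B1, u1 j ∨
        2/3 * m1 ≤ ∑ j ∈ B2, u1 j := by
      by_contra hc
      push_neg at hc
      obtain ⟨hc0, hc1, hc2⟩ := hc
      rw [htotB1] at htot1
      linarith
    have hex2 : 2/3 * m2 ≤ ∑ j ∈ B0, u2 j ∨ 2/3 * m2 ≤ ∑ j ∈ B1, u2 j ∨
        2/3 * m2 ≤ ∑ j ∈ B2, u2 j := by
      by_contra hc
      push_neg at hc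
      obtain ⟨hc0, hc1, hc2⟩ := hc
      rw [htotB2] at htot2
      linarith
    rcases hex1 with h1 | h1 | h1
    · -- σ = B0 for agent 1
      have h2 : 2/3 * m2 ≤ ∑ j ∈ B0, u2 j := by
        rcases hex2 with h | h | h
        · exact h
        · exact absurd h (not_le.mpr (hM1 h1))
        · exact absurd h (not_le.mpr (hM2 h1))
      have hs11 : ∑ j ∈ B1, u1 j < 2/3 * m1 := by
        by_contra hc; push_neg at hc; exact absurd h2 (not_le.mpr (hM3 hc))
      have hs21 : ∑ j ∈ B2, u1 j < 2/3 * m1 := by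
        by_contra hc; push_neg at hc; exact absurd h2 (not_le.mpr (hM5 hc))
      have hs12 : ∑ j ∈ B1, u2 j < 2/3 * m2 := hM1 h1
      have hs22 : ∑ j ∈ B2, u2 j < 2/3 * m2 := hM2 h1
      exact case2 G u0 u1 u2 hu2 m0 m1 m2 hm0 hm1 hm2 B0 B1 B2 hBcov hdB01 hdB02
        hdB12 hiB0 hiB1 hiB2 hvB1 hvB2 hs11 hs21 hs12 hs22 htot1 C0 C1 C2 hCcov
        hdC01 hdC02 hdC12 hiC0 hiC1 hiC2 hvC0 hvC1 hvC2
    · -- σ = B1 for agent 1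
      have h2 : 2/3 * m2 ≤ ∑ j ∈ B1, u2 j := by
        rcases hex2 with h | h | h
        · exact absurd h (not_le.mpr (hM3 h1))
        · exact h
        · exact absurd h (not_le.mpr (hM4 h1))
      have hs11 : ∑ j ∈ B0, u1 j < 2/3 * m1 := by
        by_contra hc; push_neg at hc; exact absurd h2 (not_le.mpr (hM1 hc))
      have hs21 : ∑ j ∈ B2, u1 j < 2/3 * m1 := by
        by_contra hc; push_neg at hc; exact absurd h2 (not_le.mpr (hM6 hc))
      have hs12 : ∑ j ∈ B0, u2 j < 2/3 * m2 := hM3 h1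
      have hs22 : ∑ j ∈ B2, u2 j < 2/3 * m2 := hM4 h1
      exact case2 G u0 u1 u2 hu2 m0 m1 m2 hm0 hm1 hm2 B1 B0 B2
        (fun x => by rcases hBcov x with h | h | h
                     exacts [Or.inr (Or.inl h), Or.inl h, Or.inr (Or.inr h)])
        hdB01.symm hdB12 hdB02 hiB1 hiB0 hiB2 hvB0 hvB2 hs11 hs21 hs12 hs22
        htot1 C0 C1 C2 hCcov hdC01 hdC02 hdC12 hiC0 hiC1 hiC2 hvC0 hvC1 hvC2
    · -- σ = B2 for agent 1
      have h2 : 2/3 * m2 ≤ ∑ j ∈ B2, u2 j := by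
        rcases hex2 with h | h | h
        · exact absurd h (not_le.mpr (hM5 h1))
        · exact absurd h (not_le.mpr (hM6 h1))
        · exact h
      have hs11 : ∑ j ∈ B0, u1 j < 2/3 * m1 := by
        by_contra hc; push_neg at hc; exact absurd h2 (not_le.mpr (hM2 hc))
      have hs21 : ∑ j ∈ B1, u1 j < 2/3 * m1 := by
        by_contra hc; push_neg at hc; exact absurd h2 (not_le.mpr (hM4 hc))
      have hs12 : ∑ j ∈ B0, u2 j < 2/3 * m2 := hM5 h1
      have hs22 : ∑ j ∈ B1, u2 j < 2/3 * m2 := hM6 h1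
      exact case2 G u0 u1 u2 hu2 m0 m1 m2 hm0 hm1 hm2 B2 B0 B1
        (fun x => by rcases hBcov x with h | h | h
                     exacts [Or.inr (Or.inl h), Or.inr (Or.inr h), Or.inl h])
        hdB02.symm hdB12.symm hdB01 hiB2 hiB0 hiB1 hvB0 hvB1 hs11 hs21 hs12 hs22
        htot1 C0 C1 C2 hCcov hdC01 hdC02 hdC12 hiC0 hiC1 hiC2 hvC0 hvC1 hvC2

end Core

/-- For every instance with exactly 3 agents, nonnegative additive valuations,
and conflict graph `G` with `3 > Δ(G)`, there exists a feasible
`2/3`-approximate MMS allocation. -/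
theorem mms_two_thirds_three_agents {M : Type*} [Fintype M] [DecidableEq M]
    (G : SimpleGraph M) [DecidableRel G.Adj] (hΔ : G.maxDegree < 3)
    (v : Fin 3 → M → ℝ) (hv : ∀ i j, 0 ≤ v i j) :
    ∃ A : Fin 3 → Finset M, IsAllocation A ∧ FeasibleAlloc G A ∧
      ∀ i : Fin 3, (2 / 3 : ℝ) * mmsOn 3 G Finset.univ (v i) ≤ ∑ j ∈ A i, v i j := by
  classical
  obtain ⟨P0, hd0, hi0, hu0, hnn0, hb0⟩ := exists_opt_partition G hΔ (v 0) (hv 0)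
  obtain ⟨P1, hd1, hi1, hu1, hnn1, hb1⟩ := exists_opt_partition G hΔ (v 1) (hv 1)
  obtain ⟨P2, hd2, hi2, hu2, hnn2, hb2⟩ := exists_opt_partition G hΔ (v 2) (hv 2)
  set m0 := mmsOn 3 G Finset.univ (v 0) with hm0def
  set m1 := mmsOn 3 G Finset.univ (v 1) with hm1def
  set m2 := mmsOn 3 G Finset.univ (v 2) with hm2def
  have hcov : ∀ (P : Fin 3 → Finset M), Finset.univ.biUnion P = Finset.univ →
      ∀ x : M, x ∈ P 0 ∨ x ∈ P 1 ∨ x ∈ P 2 := by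
    intro P hP x
    have hx : x ∈ Finset.univ.biUnion P := by rw [hP]; exact Finset.mem_univ x
    rw [Finset.mem_biUnion] at hx
    obtain ⟨i, _, hx⟩ := hx
    fin_cases i
    · exact Or.inl hx
    · exact Or.inr (Or.inl hx)
    · exact Or.inr (Or.inr hx)
  have htot1 : 3 * m1 ≤ ∑ j ∈ (Finset.univ : Finset M), v 1 j := by
    have h := sum_tripart (v 1) (P1 0) (P1 1) (P1 2) (hcov P1 hu1)
      (hd1 0 1 (by decide)) (hd1 0 2 (by decide)) (hd1 1 2 (by decide))
      Finset.univ
    simp only [Finset.univ_inter] at h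
    have k0 := hb1 0
    have k1 := hb1 1
    have k2 := hb1 2
    rw [h]
    linarith
  obtain ⟨D0, D1, D2, hD01, hD02, hD12, hiD0, hiD1, hiD2, hvD0, hvD1, hvD2⟩ :=
    core G (v 0) (v 1) (v 2) (hv 1) (hv 2) m0 m1 m2 hnn0 hnn1 hnn2
      (P0 0) (P0 1) (P0 2) (hcov P0 hu0)
      (hd0 0 1 (by decide)) (hd0 0 2 (by decide)) (hd0 1 2 (by decide))
      (hi0 0) (hi0 1) (hi0 2) (hb0 0) (hb0 1) (hb0 2)
      (P2 0) (P2 1) (P2 2) (hcov P2 hu2)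
      (hd2 0 1 (by decide)) (hd2 0 2 (by decide)) (hd2 1 2 (by decide))
      (hi2 0) (hi2 1) (hi2 2) (hb2 0) (hb2 1) (hb2 2) htot1
  -- assemble partial allocation
  set Ap : Fin 3 → Finset M := ![D0, D1, D2] with hAp
  have hAp0 : Ap 0 = D0 := rfl
  have hAp1 : Ap 1 = D1 := rfl
  have hAp2 : Ap 2 = D2 := rfl
  have hdp : ∀ i i' : Fin 3, i ≠ i' → Disjoint (Ap i) (Ap i') := by
    intro i i' hii
    fin_cases i <;> fin_cases i' <;>
      first
        | exact absurd rfl hii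
        | exact hD01 | exact hD02 | exact hD12
        | exact hD01.symm | exact hD02.symm | exact hD12.symm
  have hip : ∀ i, IndepSet G (Ap i) := by
    intro i
    fin_cases i
    · exact hiD0
    · exact hiD1
    · exact hiD2
  have hbi : Finset.univ.biUnion Ap = Finset.univ \ (Finset.univ \ (D0 ∪ D1 ∪ D2)) := by
    have h1 : Finset.univ.biUnion Ap = D0 ∪ D1 ∪ D2 := by
      ext x
      simp only [Finset.mem_biUnion, Finset.mem_univ, true_and, Finset.mem_union]
      constructor
      · rintro ⟨i, hx⟩
        fin_cases i
        · exact Or.inl (Or.inl hx)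
        · exact Or.inl (Or.inr hx)
        · exact Or.inr hx
      · rintro ((hx | hx) | hx)
        · exact ⟨0, hx⟩
        · exact ⟨1, hx⟩
        · exact ⟨2, hx⟩
    rw [h1]
    rw [Finset.sdiff_sdiff_self_left, Finset.univ_inter]
  obtain ⟨A, hsub, hdA, hiA, huA⟩ := extend_alloc_s15 G hΔ
    (Finset.univ \ (D0 ∪ D1 ∪ D2)) Ap hdp hip hbi
  refine ⟨A, ⟨hdA, huA⟩, hiA, ?_⟩
  intro i
  fin_cases i
  · calc (2/3 : ℝ) * m0 ≤ ∑ j ∈ D0, v 0 j := hvD0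
      _ ≤ ∑ j ∈ A 0, v 0 j := sum_le_of_subset (hv 0) (hAp0 ▸ hsub 0)
  · calc (2/3 : ℝ) * m1 ≤ ∑ j ∈ D1, v 1 j := hvD1
      _ ≤ ∑ j ∈ A 1, v 1 j := sum_le_of_subset (hv 1) (hAp1 ▸ hsub 1)
  · calc (2/3 : ℝ) * m2 ≤ ∑ j ∈ D2, v 2 j := hvD2
      _ ≤ ∑ j ∈ A 2, v 2 j := sum_le_of_subset (hv 2) (hAp2 ▸ hsub 2)
end

section
/- For every problem instance (N, M, V, G) in which the conflict graph G is bipartite and |N| > Δ(G), there exists a feasible 1/2-approximate MMS allocation. (In the paper, such an allocation is moreover found in polynomial time.) -/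
open Finset

lemma mms_ub {M : Type*} [Fintype M] [DecidableEq M] {n : ℕ}
    (G : SimpleGraph M) (hn : 0 < n) (w : M → ℝ) (hw : ∀ j, 0 ≤ w j)
    (D : Finset M) (hD : D.card < n) :
    ((n : ℝ) - D.card) * mmsOn n G Finset.univ w ≤ ∑ j ∈ Dᶜ, w j := by
  classical
  have hden : (0:ℝ) < (n:ℝ) - D.card := by
    have : (D.card:ℝ) < n := by exact_mod_cast hD
    linarith
  have hnum : (0:ℝ) ≤ ∑ j ∈ Dᶜ, w j := sum_nonneg (fun j _ => hw j)
  have hc : 0 ≤ (∑ j ∈ Dᶜ, w j) / ((n:ℝ) - D.card) := div_nonneg hnum hden.le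
  have hsup : mmsOn n G Finset.univ w ≤ (∑ j ∈ Dᶜ, w j) / ((n:ℝ) - D.card) := by
    apply Real.sSup_le _ hc
    rintro x ⟨A, hdisj, hcov, hind, rfl⟩
    have hbdd : BddBelow (Set.range fun i : Fin n => ∑ j ∈ A i, w j) :=
      (Set.finite_range _).bddBelow
    have hxle : ∀ k : Fin n, (⨅ i : Fin n, ∑ j ∈ A i, w j) ≤ ∑ j ∈ A k, w j :=
      fun k => ciInf_le hbdd k
    set x := ⨅ i : Fin n, ∑ j ∈ A i, w j with hx
    rcases le_or_gt x 0 with hx0 | hx0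
    · exact hx0.trans hc
    · rw [le_div_iff₀ hden]
      set Bad : Finset (Fin n) := Finset.univ.filter (fun k => ¬ Disjoint (A k) D) with hBd
      have hbadcard : Bad.card ≤ D.card := by
        rcases Bad.eq_empty_or_nonempty with hB | ⟨k₀, hk₀⟩
        · simp [hB]
        · have hk₀' : ((A k₀) ∩ D).Nonempty := by
            rw [← Finset.not_disjoint_iff_nonempty_inter]
            exact (mem_filter.mp hk₀).2
          apply Finset.card_le_card_of_injOn
            (fun k => if h : ((A k) ∩ D).Nonempty then h.choose else hk₀'.choose)
          · intro k hk
            have h : ((A k) ∩ D).Nonempty := by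
              rw [← Finset.not_disjoint_iff_nonempty_inter]
              exact (mem_filter.mp hk).2
            simp only [dif_pos h]
            exact (mem_inter.mp h.choose_spec).2
          · intro a ha b hb hab
            by_contra hne
            have hha : ((A a) ∩ D).Nonempty := by
              rw [← Finset.not_disjoint_iff_nonempty_inter]; exact (mem_filter.mp ha).2
            have hhb : ((A b) ∩ D).Nonempty := by
              rw [← Finset.not_disjoint_iff_nonempty_inter]; exact (mem_filter.mp hb).2
            simp only [dif_pos hha, dif_pos hhb] at hab
            have h1 : hha.choose ∈ A a := (mem_inter.mp hha.choose_spec).1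
            have h2 : hhb.choose ∈ A b := (mem_inter.mp hhb.choose_spec).1
            rw [hab] at h1
            exact (Finset.disjoint_left.mp (hdisj a b hne) h1) h2
      set K : Finset (Fin n) := Finset.univ.filter (fun k => Disjoint (A k) D) with hK
      have hKB : K.card + Bad.card = n := by
        rw [hK, hBd, card_filter_add_card_filter_not, card_univ, Fintype.card_fin]
      have hKge : (n:ℝ) - D.card ≤ K.card := by
        have : n - D.card ≤ K.card := by omega
        have h' : ((n - D.card : ℕ) : ℝ) ≤ (K.card : ℝ) := by exact_mod_cast this
        rw [Nat.cast_sub hD.le] at h'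
        exact h'
      have hKdisj : (K : Set (Fin n)).PairwiseDisjoint A :=
        fun a _ b _ hab => hdisj a b hab
      have h4 : ∑ k ∈ K, ∑ j ∈ A k, w j = ∑ j ∈ K.biUnion A, w j :=
        (sum_biUnion hKdisj).symm
      have h5 : K.biUnion A ⊆ Dᶜ := by
        intro a ha
        obtain ⟨k, hkK, hka⟩ := mem_biUnion.mp ha
        rw [mem_compl]
        intro haD
        exact (Finset.disjoint_left.mp (mem_filter.mp hkK).2 hka) haD
      calc x * ((n:ℝ) - D.card) ≤ x * K.card := by
            apply mul_le_mul_of_nonneg_left hKge hx0.le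
      _ = ∑ _k ∈ K, x := by rw [sum_const, nsmul_eq_mul]; ring
      _ ≤ ∑ k ∈ K, ∑ j ∈ A k, w j := sum_le_sum (fun k _ => hxle k)
      _ = ∑ j ∈ K.biUnion A, w j := h4
      _ ≤ ∑ j ∈ Dᶜ, w j := sum_le_sum_of_subset_of_nonneg h5 (fun j _ _ => hw j)
  calc ((n : ℝ) - D.card) * mmsOn n G Finset.univ w
      ≤ ((n : ℝ) - D.card) * ((∑ j ∈ Dᶜ, w j) / ((n:ℝ) - D.card)) :=
        mul_le_mul_of_nonneg_left hsup hden.le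
  _ = ∑ j ∈ Dᶜ, w j := by field_simp

section Aux
variable {M : Type*} [Fintype M] [DecidableEq M] {n : ℕ}

def GoodAlloc (v : Fin n → M → ℝ) (t : Fin n → ℝ) (X : Finset M)
    (T : Finset (Fin n)) (R : Finset M) : Prop :=
  ∃ A : Fin n → Finset M, (∀ i, A i ⊆ R) ∧
    (∀ i i' : Fin n, i ≠ i' → Disjoint (A i) (A i')) ∧
    (∀ i, A i ⊆ X ∨ A i ⊆ Xᶜ) ∧
    (∀ i ∈ T, t i ≤ ∑ j ∈ A i, v i j) ∧ (∀ i ∉ T, A i = ∅)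

lemma goodalloc_empty (v : Fin n → M → ℝ) (t : Fin n → ℝ) (X : Finset M)
    (R : Finset M) : GoodAlloc v t X ∅ R :=
  ⟨fun _ => ∅, fun _ => empty_subset _, fun _ _ _ => disjoint_empty_left _,
    fun _ => Or.inl (empty_subset _), fun i hi => absurd hi (notMem_empty i), fun _ _ => rfl⟩

lemma bag_lemma (v : Fin n → M → ℝ) (t : Fin n → ℝ) (T : Finset (Fin n)) (S : Finset M)
    (h0 : ∀ i ∈ T, 0 < t i)
    (hsmall : ∀ i ∈ T, ∀ j ∈ S, v i j < t i)
    (i₀ : Fin n) (hi₀ : i₀ ∈ T) (hbig : t i₀ ≤ ∑ j ∈ S, v i₀ j) :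
    ∃ B ⊆ S, ∃ i' ∈ T, t i' ≤ ∑ j ∈ B, v i' j ∧ ∀ i ∈ T, ∑ j ∈ B, v i j < 2 * t i := by
  classical
  set C : Finset (Finset M) := S.powerset.filter (fun B => ∃ i ∈ T, t i ≤ ∑ j ∈ B, v i j) with hC
  have hSC : S ∈ C := by
    simp only [hC, mem_filter, mem_powerset]
    exact ⟨subset_rfl, i₀, hi₀, hbig⟩
  obtain ⟨B, hBC, hmin⟩ := C.exists_min_image Finset.card ⟨S, hSC⟩
  simp only [hC, mem_filter, mem_powerset] at hBC
  obtain ⟨hBS, i', hi', hval⟩ := hBC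
  refine ⟨B, hBS, i', hi', hval, ?_⟩
  have hBne : B.Nonempty := by
    rcases B.eq_empty_or_nonempty with h | h
    · exfalso; rw [h] at hval; simp at hval; linarith [h0 i' hi']
    · exact h
  obtain ⟨j, hj⟩ := hBne
  have herase : ∀ i ∈ T, ∑ k ∈ B.erase j, v i k < t i := by
    intro i hi
    by_contra hcon
    push_neg at hcon
    have hmem : B.erase j ∈ C := by
      simp only [hC, mem_filter, mem_powerset]
      exact ⟨(erase_subset _ _).trans hBS, i, hi, hcon⟩
    have := hmin _ hmem
    have hlt : (B.erase j).card < B.card := card_erase_lt_of_mem hj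
    omega
  intro i hi
  have hsum : ∑ k ∈ B.erase j, v i k + v i j = ∑ k ∈ B, v i k := Finset.sum_erase_add _ _ hj
  have h1 := herase i hi
  have h2 := hsmall i hi j (hBS hj)
  linarith

lemma assemble {v : Fin n → M → ℝ} {t : Fin n → ℝ} {X : Finset M}
    {T : Finset (Fin n)} {R : Finset M} {B : Finset M} {i' : Fin n}
    (hi' : i' ∈ T) (hBR : B ⊆ R) (hmono : B ⊆ X ∨ B ⊆ Xᶜ)
    (hval : t i' ≤ ∑ j ∈ B, v i' j)
    (h : GoodAlloc v t X (T.erase i') (R \ B)) : GoodAlloc v t X T R := by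
  classical
  obtain ⟨A, hsub, hdisj, hm, hv, hz⟩ := h
  refine ⟨Function.update A i' B, ?_, ?_, ?_, ?_, ?_⟩
  · intro i
    rcases eq_or_ne i i' with rfl | hne
    · simpa using hBR
    · rw [Function.update_of_ne hne]
      exact (hsub i).trans (sdiff_subset)
  · intro a b hab
    rcases eq_or_ne a i' with rfl | ha
    · rw [Function.update_self, Function.update_of_ne hab.symm]
      exact (sdiff_disjoint.mono_left (hsub b)).symm
    · rcases eq_or_ne b i' with rfl | hb
      · rw [Function.update_self, Function.update_of_ne ha]
        exact sdiff_disjoint.mono_left (hsub a)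
      · rw [Function.update_of_ne ha, Function.update_of_ne hb]
        exact hdisj a b hab
  · intro i
    rcases eq_or_ne i i' with rfl | hne
    · simpa using hmono
    · rw [Function.update_of_ne hne]; exact hm i
  · intro i hi
    rcases eq_or_ne i i' with rfl | hne
    · simpa using hval
    · rw [Function.update_of_ne hne]
      exact hv i (mem_erase.mpr ⟨hne, hi⟩)
  · intro i hi
    have hne : i ≠ i' := fun h => hi (h ▸ hi')
    rw [Function.update_of_ne hne]
    exact hz i (fun h => hi (mem_of_mem_erase h))

lemma core_s19 (v : Fin n → M → ℝ) (t : Fin n → ℝ) (X : Finset M) :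
    ∀ N : ℕ, ∀ T : Finset (Fin n), T.card ≤ N → ∀ R : Finset M,
    (∀ i ∈ T, 0 < t i) →
    (∀ i ∈ T, ∀ j ∈ R, v i j < t i) →
    (∀ i ∈ T, 2 * (T.card : ℝ) * t i ≤ ∑ j ∈ R, v i j ∨
      (2 * (T.card : ℝ) - 1) * t i ≤ ∑ j ∈ R ∩ Xᶜ, v i j) →
    GoodAlloc v t X T R := by
  classical
  intro N
  induction N with
  | zero =>
    intro T hT R _ _ _
    have : T = ∅ := card_eq_zero.mp (Nat.le_zero.mp hT)
    exact this ▸ goodalloc_empty v t X R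
  | succ N ih =>
    intro T hT R h0 hs hinv
    rcases T.eq_empty_or_nonempty with rfl | hne
    · exact goodalloc_empty v t X R
    have hc1 : 1 ≤ T.card := hne.card_pos
    by_cases hcase : ∃ i₀ ∈ T, t i₀ ≤ ∑ j ∈ R ∩ X, v i₀ j
    · obtain ⟨i₀, hi₀, hb⟩ := hcase
      obtain ⟨B, hBS, i', hi', hval, hub⟩ := bag_lemma v t T (R ∩ X) h0
        (fun i hi j hj => hs i hi j (mem_of_mem_inter_left hj)) i₀ hi₀ hb
      have hBR : B ⊆ R := hBS.trans inter_subset_left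
      apply assemble hi' hBR (Or.inl (hBS.trans inter_subset_right)) hval
      have hcard' : ((T.erase i').card : ℝ) = (T.card : ℝ) - 1 := by
        rw [card_erase_of_mem hi', Nat.cast_sub hc1, Nat.cast_one]
      apply ih (T.erase i') (by rw [card_erase_of_mem hi']; omega) (R \ B)
        (fun i hi => h0 i (mem_of_mem_erase hi))
        (fun i hi j hj => hs i (mem_of_mem_erase hi) j (mem_sdiff.mp hj).1)
      intro i hi
      have hiT := mem_of_mem_erase hi
      have hBlt := hub i hiT
      have ht := h0 i hiT
      rcases hinv i hiT with h1 | h2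
      · left
        rw [Finset.sum_sdiff_eq_sub hBR, hcard']
        have hexp : 2 * ((T.card : ℝ) - 1) * t i = 2 * (T.card : ℝ) * t i - 2 * t i := by ring
        rw [hexp]; linarith
      · right
        have hXc : (R \ B) ∩ Xᶜ = R ∩ Xᶜ := by
          ext a
          simp only [mem_sdiff, mem_inter, mem_compl]
          constructor
          · rintro ⟨⟨h1, _⟩, h2⟩; exact ⟨h1, h2⟩
          · rintro ⟨h1, h2⟩
            exact ⟨⟨h1, fun hB => h2 ((hBS.trans inter_subset_right) hB)⟩, h2⟩
        rw [hXc, hcard']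
        have hexp : (2 * ((T.card : ℝ) - 1) - 1) * t i = (2 * (T.card : ℝ) - 1) * t i - 2 * t i := by ring
        rw [hexp]; linarith
    · push_neg at hcase
      have hinv2 : ∀ i ∈ T, (2 * (T.card : ℝ) - 1) * t i ≤ ∑ j ∈ R ∩ Xᶜ, v i j := by
        intro i hi
        rcases hinv i hi with h1 | h2
        · have hRX : R \ X = R ∩ Xᶜ := by
            ext a; simp [mem_sdiff, mem_inter, mem_compl]
          have hsplit := Finset.sum_inter_add_sum_sdiff R X (v i)
          rw [hRX] at hsplit
          have := hcase i hi
          have hexp : (2 * (T.card : ℝ) - 1) * t i = 2 * (T.card : ℝ) * t i - t i := by ring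
          rw [hexp]; linarith
        · exact h2
      obtain ⟨i₀, hi₀⟩ := hne
      have ht0 := h0 i₀ hi₀
      have hcge : (1 : ℝ) ≤ 2 * (T.card : ℝ) - 1 := by
        have : (1 : ℝ) ≤ (T.card : ℝ) := by exact_mod_cast hc1
        linarith
      have hb : t i₀ ≤ ∑ j ∈ R ∩ Xᶜ, v i₀ j := by
        have := hinv2 i₀ hi₀
        nlinarith
      obtain ⟨B, hBS, i', hi', hval, hub⟩ := bag_lemma v t T (R ∩ Xᶜ) h0
        (fun i hi j hj => hs i hi j (mem_of_mem_inter_left hj)) i₀ hi₀ hb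
      have hBR : B ⊆ R := hBS.trans inter_subset_left
      apply assemble hi' hBR (Or.inr (hBS.trans inter_subset_right)) hval
      have hcard' : ((T.erase i').card : ℝ) = (T.card : ℝ) - 1 := by
        rw [card_erase_of_mem hi', Nat.cast_sub hc1, Nat.cast_one]
      apply ih (T.erase i') (by rw [card_erase_of_mem hi']; omega) (R \ B)
        (fun i hi => h0 i (mem_of_mem_erase hi))
        (fun i hi j hj => hs i (mem_of_mem_erase hi) j (mem_sdiff.mp hj).1)
      intro i hi
      have hiT := mem_of_mem_erase hi
      have hBlt := hub i hiT
      have ht := h0 i hiT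
      right
      have hXc : (R \ B) ∩ Xᶜ = (R ∩ Xᶜ) \ B := by
        ext a
        simp only [mem_sdiff, mem_inter, mem_compl]
        tauto
      rw [hXc, Finset.sum_sdiff_eq_sub hBS, hcard']
      have hexp : (2 * ((T.card : ℝ) - 1) - 1) * t i = (2 * (T.card : ℝ) - 1) * t i - 2 * t i := by ring
      rw [hexp]
      linarith [hinv2 i hiT]

end Aux

section Aux2
variable {M : Type*} [Fintype M] [DecidableEq M] {n : ℕ}

lemma phase1 (v : Fin n → M → ℝ) (t : Fin n → ℝ) (X : Finset M) :
    ∀ N : ℕ, ∀ T : Finset (Fin n), T.card ≤ N → ∀ R : Finset M,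
    (∀ i ∈ T, 0 < t i) →
    (∀ i ∈ T, ∀ D : Finset M, D.card < n →
      ((n : ℝ) - D.card) * (2 * t i) ≤ ∑ j ∈ Dᶜ, v i j) →
    T.card + Rᶜ.card ≤ n →
    GoodAlloc v t X T R := by
  classical
  intro N
  induction N with
  | zero =>
    intro T hT R _ _ _
    have : T = ∅ := card_eq_zero.mp (Nat.le_zero.mp hT)
    exact this ▸ goodalloc_empty v t X R
  | succ N ih =>
    intro T hT R h0 hub hcard
    rcases T.eq_empty_or_nonempty with rfl | hne
    · exact goodalloc_empty v t X R
    have hc1 : 1 ≤ T.card := hne.card_pos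
    by_cases hbig : ∃ i' ∈ T, ∃ j ∈ R, t i' ≤ v i' j
    · obtain ⟨i', hi', j, hj, hval⟩ := hbig
      have hmono : ({j} : Finset M) ⊆ X ∨ ({j} : Finset M) ⊆ Xᶜ := by
        by_cases hx : j ∈ X
        · exact Or.inl (singleton_subset_iff.mpr hx)
        · exact Or.inr (singleton_subset_iff.mpr (mem_compl.mpr hx))
      apply assemble hi' (singleton_subset_iff.mpr hj) hmono (by simpa using hval)
      apply ih (T.erase i') (by rw [card_erase_of_mem hi']; omega) (R \ {j})
        (fun i hi => h0 i (mem_of_mem_erase hi))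
        (fun i hi => hub i (mem_of_mem_erase hi))
      have hsub : (R \ {j})ᶜ ⊆ Rᶜ ∪ {j} := by
        intro a ha
        simp only [mem_compl, mem_sdiff, mem_singleton, not_and, not_not] at ha
        simp only [mem_union, mem_compl, mem_singleton]
        by_cases haR : a ∈ R
        · exact Or.inr (ha haR)
        · exact Or.inl haR
      have h1 : ((R \ {j})ᶜ).card ≤ Rᶜ.card + 1 := by
        calc ((R \ {j})ᶜ).card ≤ (Rᶜ ∪ {j}).card := card_le_card hsub
        _ ≤ Rᶜ.card + ({j} : Finset M).card := card_union_le _ _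
        _ = Rᶜ.card + 1 := by rw [card_singleton]
      have h2 : (T.erase i').card = T.card - 1 := card_erase_of_mem hi'
      omega
    · push_neg at hbig
      apply core_s19 v t X T.card T le_rfl R h0 hbig
      intro i hi
      left
      have hlt : Rᶜ.card < n := by omega
      have := hub i hi Rᶜ hlt
      rw [compl_compl] at this
      have hle : (T.card : ℝ) ≤ (n : ℝ) - (Rᶜ.card : ℝ) := by
        have : T.card + Rᶜ.card ≤ n := hcard
        have h' : (T.card : ℝ) + (Rᶜ.card : ℝ) ≤ (n : ℝ) := by exact_mod_cast this
        linarith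
      have ht := h0 i hi
      calc 2 * (T.card : ℝ) * t i = (T.card : ℝ) * (2 * t i) := by ring
      _ ≤ ((n : ℝ) - (Rᶜ.card : ℝ)) * (2 * t i) := by
          apply mul_le_mul_of_nonneg_right hle; linarith
      _ ≤ ∑ j ∈ R, v i j := this

lemma cleanup (G : SimpleGraph M) [DecidableRel G.Adj] (hΔ : G.maxDegree < n) :
    ∀ N : ℕ, ∀ A : Fin n → Finset M, ((Finset.univ.biUnion A)ᶜ).card ≤ N →
    (∀ i i' : Fin n, i ≠ i' → Disjoint (A i) (A i')) →
    (∀ i : Fin n, ∀ j ∈ A i, ∀ j' ∈ A i, ¬ G.Adj j j') →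
    ∃ A' : Fin n → Finset M, IsAllocation A' ∧ FeasibleAlloc G A' ∧ ∀ i, A i ⊆ A' i := by
  classical
  intro N
  induction N with
  | zero =>
    intro A hA hdisj hind
    have hempty : (Finset.univ.biUnion A)ᶜ = ∅ := card_eq_zero.mp (Nat.le_zero.mp hA)
    have huniv : Finset.univ.biUnion A = Finset.univ := by
      rwa [← compl_eq_empty_iff]
    exact ⟨A, ⟨hdisj, huniv⟩, hind, fun i => subset_rfl⟩
  | succ N ih =>
    intro A hA hdisj hind
    rcases (Finset.univ.biUnion A)ᶜ.eq_empty_or_nonempty with hempty | ⟨j, hj⟩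
    · have huniv : Finset.univ.biUnion A = Finset.univ := by rwa [← compl_eq_empty_iff]
      exact ⟨A, ⟨hdisj, huniv⟩, hind, fun i => subset_rfl⟩
    · have hjnot : ∀ i, j ∉ A i := by
        intro i hji
        have : j ∈ Finset.univ.biUnion A := mem_biUnion.mpr ⟨i, mem_univ i, hji⟩
        exact (mem_compl.mp hj) this
      set Bad : Finset (Fin n) := Finset.univ.filter
        (fun i => ¬ Disjoint (A i) (G.neighborFinset j)) with hBad
      have hBadcard : Bad.card ≤ G.degree j := by
        rcases Bad.eq_empty_or_nonempty with hB | ⟨k₀, hk₀⟩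
        · simp [hB]
        · have hk₀' : ((A k₀) ∩ (G.neighborFinset j)).Nonempty := by
            rw [← Finset.not_disjoint_iff_nonempty_inter]
            exact (mem_filter.mp hk₀).2
          rw [SimpleGraph.degree]
          apply Finset.card_le_card_of_injOn
            (fun k => if h : ((A k) ∩ (G.neighborFinset j)).Nonempty then h.choose
              else hk₀'.choose)
          · intro k hk
            have h : ((A k) ∩ (G.neighborFinset j)).Nonempty := by
              rw [← Finset.not_disjoint_iff_nonempty_inter]
              exact (mem_filter.mp hk).2
            simp only [dif_pos h]
            exact (mem_inter.mp h.choose_spec).2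
          · intro a ha b hb hab
            by_contra hne
            have hha : ((A a) ∩ (G.neighborFinset j)).Nonempty := by
              rw [← Finset.not_disjoint_iff_nonempty_inter]; exact (mem_filter.mp ha).2
            have hhb : ((A b) ∩ (G.neighborFinset j)).Nonempty := by
              rw [← Finset.not_disjoint_iff_nonempty_inter]; exact (mem_filter.mp hb).2
            simp only [dif_pos hha, dif_pos hhb] at hab
            have h1 : hha.choose ∈ A a := (mem_inter.mp hha.choose_spec).1
            have h2 : hhb.choose ∈ A b := (mem_inter.mp hhb.choose_spec).1
            rw [hab] at h1
            exact (Finset.disjoint_left.mp (hdisj a b hne) h1) h2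
      have hBadlt : Bad.card < n := by
        have := G.degree_le_maxDegree j
        omega
      have hex : ∃ i₀, i₀ ∉ Bad := by
        by_contra hcon
        push_neg at hcon
        have : Bad = Finset.univ := eq_univ_iff_forall.mpr hcon
        rw [this, card_univ, Fintype.card_fin] at hBadlt
        omega
      obtain ⟨i₀, hi₀⟩ := hex
      have hdisj₀ : Disjoint (A i₀) (G.neighborFinset j) := by
        by_contra hcon
        exact hi₀ (mem_filter.mpr ⟨mem_univ _, hcon⟩)
      set A₁ := Function.update A i₀ (insert j (A i₀)) with hA₁
      have hbiU : Finset.univ.biUnion A₁ = insert j (Finset.univ.biUnion A) := by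
        ext a
        constructor
        · intro haU
          obtain ⟨k, -, hk⟩ := mem_biUnion.mp haU
          rw [hA₁] at hk
          rcases eq_or_ne k i₀ with rfl | hne
          · rw [Function.update_self] at hk
            rcases mem_insert.mp hk with rfl | h
            · exact mem_insert_self _ _
            · exact mem_insert_of_mem (mem_biUnion.mpr ⟨k, mem_univ _, h⟩)
          · rw [Function.update_of_ne hne] at hk
            exact mem_insert_of_mem (mem_biUnion.mpr ⟨k, mem_univ _, hk⟩)
        · intro h
          rcases mem_insert.mp h with rfl | haU
          · exact mem_biUnion.mpr ⟨i₀, mem_univ _,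
              by rw [hA₁, Function.update_self]; exact mem_insert_self _ _⟩
          · obtain ⟨k, -, hk⟩ := mem_biUnion.mp haU
            refine mem_biUnion.mpr ⟨k, mem_univ _, ?_⟩
            rw [hA₁]
            rcases eq_or_ne k i₀ with rfl | hne
            · rw [Function.update_self]; exact mem_insert_of_mem hk
            · rw [Function.update_of_ne hne]; exact hk
      have hcard₁ : ((Finset.univ.biUnion A₁)ᶜ).card ≤ N := by
        rw [hbiU]
        have : (insert j (Finset.univ.biUnion A))ᶜ = ((Finset.univ.biUnion A)ᶜ).erase j := by
          ext a
          simp only [mem_compl, mem_insert, mem_erase]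
          tauto
        rw [this, card_erase_of_mem hj]
        omega
      have hdisj₁ : ∀ i i' : Fin n, i ≠ i' → Disjoint (A₁ i) (A₁ i') := by
        intro a b hab
        rcases eq_or_ne a i₀ with rfl | ha
        · rw [hA₁, Function.update_self, Function.update_of_ne hab.symm]
          rw [disjoint_insert_left]
          exact ⟨hjnot b, hdisj a b hab⟩
        · rcases eq_or_ne b i₀ with rfl | hb
          · rw [hA₁, Function.update_self, Function.update_of_ne ha]
            rw [disjoint_insert_right]
            exact ⟨hjnot a, hdisj a b hab⟩
          · rw [hA₁, Function.update_of_ne ha, Function.update_of_ne hb]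
            exact hdisj a b hab
      have hind₁ : ∀ i : Fin n, ∀ a ∈ A₁ i, ∀ b ∈ A₁ i, ¬ G.Adj a b := by
        intro i a ha b hb
        rcases eq_or_ne i i₀ with rfl | hne
        · rw [hA₁, Function.update_self] at ha hb
          rcases mem_insert.mp ha with rfl | ha'
          · rcases mem_insert.mp hb with rfl | hb'
            · exact G.irrefl
            · intro hadj
              exact (Finset.disjoint_right.mp hdisj₀
                ((SimpleGraph.mem_neighborFinset _ _ _).mpr hadj)) hb'
          · rcases mem_insert.mp hb with rfl | hb'
            · intro hadj
              exact (Finset.disjoint_right.mp hdisj₀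
                ((SimpleGraph.mem_neighborFinset _ _ _).mpr hadj.symm)) ha'
            · exact hind i a ha' b hb'
        · rw [hA₁, Function.update_of_ne hne] at ha hb
          exact hind i a ha b hb
      obtain ⟨A', hAlloc, hFeas, hsub⟩ := ih A₁ hcard₁ hdisj₁ hind₁
      refine ⟨A', hAlloc, hFeas, fun i => ?_⟩
      refine subset_trans ?_ (hsub i)
      rcases eq_or_ne i i₀ with rfl | hne
      · rw [hA₁, Function.update_self]; exact subset_insert _ _
      · rw [hA₁, Function.update_of_ne hne]

end Aux2

/-- For every instance whose conflict graph `G` is bipartite (i.e.,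
2-colorable) with `|N| > Δ(G)`, there exists a feasible `1/2`-approximate MMS
allocation. -/
theorem mms_half_of_bipartite {M : Type*} [Fintype M] [DecidableEq M]
    (G : SimpleGraph M) [DecidableRel G.Adj] (n : ℕ) (hΔ : G.maxDegree < n)
    (hbip : G.Colorable 2)
    (v : Fin n → M → ℝ) (hv : ∀ i j, 0 ≤ v i j) :
    ∃ A : Fin n → Finset M, IsAllocation A ∧ FeasibleAlloc G A ∧
      ∀ i : Fin n, (1 / 2 : ℝ) * mmsOn n G Finset.univ (v i) ≤ ∑ j ∈ A i, v i j := by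
  classical
  have hn : 0 < n := lt_of_le_of_lt (Nat.zero_le _) hΔ
  obtain ⟨C⟩ := hbip
  set X : Finset M := Finset.univ.filter (fun m => C m = 0) with hX
  set t : Fin n → ℝ := fun i => mmsOn n G Finset.univ (v i) / 2 with ht
  set T : Finset (Fin n) := Finset.univ.filter (fun i => 0 < t i) with hT
  have hgood := phase1 v t X T.card T le_rfl Finset.univ
    (fun i hi => (mem_filter.mp hi).2)
    (fun i _ D hD => by
      have h2t : 2 * t i = mmsOn n G Finset.univ (v i) := by rw [ht]; ring
      rw [h2t]
      exact mms_ub G hn (v i) (hv i) D hD)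
    (by
      rw [compl_univ, card_empty]
      have := card_le_univ T
      simp only [card_univ, Fintype.card_fin] at this
      omega)
  obtain ⟨A₀, hsub₀, hdisj₀, hmono₀, hval₀, hz₀⟩ := hgood
  have hfin2 : ∀ c : Fin 2, c ≠ 0 → c = 1 := by decide
  have hind₀ : ∀ i : Fin n, ∀ a ∈ A₀ i, ∀ b ∈ A₀ i, ¬ G.Adj a b := by
    intro i a ha b hb hadj
    have hCne := C.valid hadj
    rcases hmono₀ i with hXs | hXs
    · have h1 : C a = 0 := (mem_filter.mp (hXs ha)).2
      have h2 : C b = 0 := (mem_filter.mp (hXs hb)).2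
      exact hCne (h1.trans h2.symm)
    · have h1 : C a ≠ 0 := by
        have h := mem_compl.mp (hXs ha)
        intro h0
        exact h (mem_filter.mpr ⟨mem_univ _, h0⟩)
      have h2 : C b ≠ 0 := by
        have h := mem_compl.mp (hXs hb)
        intro h0
        exact h (mem_filter.mpr ⟨mem_univ _, h0⟩)
      exact hCne ((hfin2 _ h1).trans (hfin2 _ h2).symm)
  obtain ⟨A', hAlloc, hFeas, hsub'⟩ :=
    cleanup G hΔ ((Finset.univ.biUnion A₀)ᶜ).card A₀ le_rfl hdisj₀ hind₀
  refine ⟨A', hAlloc, hFeas, fun i => ?_⟩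
  have hsum_mono : ∑ j ∈ A₀ i, v i j ≤ ∑ j ∈ A' i, v i j :=
    sum_le_sum_of_subset_of_nonneg (hsub' i) (fun j _ _ => hv i j)
  have hhalf : (1/2:ℝ) * mmsOn n G Finset.univ (v i) = t i := by rw [ht]; ring
  by_cases hiT : i ∈ T
  · have := hval₀ i hiT
    rw [hhalf]
    linarith
  · have hle : ¬ 0 < t i := fun h => hiT (mem_filter.mpr ⟨mem_univ _, h⟩)
    push_neg at hle
    rw [hhalf]
    exact hle.trans (sum_nonneg fun j _ => hv i j)
end
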